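/- arXiv:1501.02127 — 3 statements merged into one kernel-verified Lean document; each statement's English description precedes it below -/
import Mathlib

section
/- Let n ≥ 1 and let J : ℝⁿ × ℝ → ℝ be a measurable kernel satisfying: supp J ⊂ ℝⁿ × [0,∞); J ≥ 0; J ∈ L¹(ℝ^{n+1}) with ∬ J = 1; and J has compact support. Set α = sup{β : ∬_{s ≤ β} J(y,s) dy ds < 1} and, for r > 0, J_r(x,t) = r^{-(n+2)} J(x/r, t/r²). Let 0 < γ ≤ 1. Then there exists a constant C > 0, depending only on J and γ, such that for every r > 0 and every f ∈ C^{0,γ}(ℝⁿ) ∩ L^∞(ℝⁿ), the unique bounded continuous solution u(J_r, f) of the problem u(x,t) = ∬ J_r(x−y, t−s) ū(y,s) dy ds (with ū = f for s < 0 and ū = u for s ≥ 0) satisfies sup_{(x,t) ∈ ℝⁿ×[0, α r²]} |u(J_r,f)(x,t) − f(x)| ≤ C [f]_γ r^γ. -/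
open MeasureTheory Real NNReal

lemma ctrw_smul_prod {α β : Type*} [MeasurableSpace α] [MeasurableSpace β]
    (μ : Measure α) (ν : Measure β) [SigmaFinite μ] [SigmaFinite ν]
    (c d : ENNReal) (hc : c ≠ 0) (hc' : c ≠ ⊤) (hd : d ≠ 0) (hd' : d ≠ ⊤) :
    (c • μ).prod (d • ν) = (c * d) • (μ.prod ν) := by
  have h : μ.prod ν = (c * d)⁻¹ • ((c • μ).prod (d • ν)) := by
    refine Measure.prod_eq fun s t hs ht => ?_
    rw [Measure.smul_apply, Measure.prod_prod, Measure.smul_apply, Measure.smul_apply,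
      smul_eq_mul, smul_eq_mul, smul_eq_mul, ENNReal.mul_inv (Or.inl hc) (Or.inl hc')]
    calc c⁻¹ * d⁻¹ * (c * μ s * (d * ν t)) = (c⁻¹ * c) * (d⁻¹ * d) * (μ s * ν t) := by ring
    _ = μ s * ν t := by
        rw [ENNReal.inv_mul_cancel hc hc', ENNReal.inv_mul_cancel hd hd', one_mul, one_mul]
  rw [h, smul_smul, ENNReal.mul_inv_cancel (by simp [hc, hd]) (by
    simp [ENNReal.mul_ne_top, hc', hd']), one_smul]

lemma ctrw_map_phi (n : ℕ) {r : ℝ} (hr : 0 < r) (x : EuclideanSpace ℝ (Fin n)) (t : ℝ) :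
    Measure.map (fun q : EuclideanSpace ℝ (Fin n) × ℝ =>
        ((r⁻¹ • (x - q.1), (t - q.2) / r ^ 2) : EuclideanSpace ℝ (Fin n) × ℝ))
      (volume : Measure (EuclideanSpace ℝ (Fin n) × ℝ))
      = ENNReal.ofReal (r ^ (n + 2)) • volume := by
  have hr2 : (0:ℝ) < r ^ 2 := by positivity
  have hinner : Measurable (fun q : EuclideanSpace ℝ (Fin n) × ℝ => ((x - q.1, t - q.2) :
      EuclideanSpace ℝ (Fin n) × ℝ)) :=
    (measurable_fst.const_sub x).prodMk (measurable_snd.const_sub t)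
  have houter : Measurable (fun p : EuclideanSpace ℝ (Fin n) × ℝ => ((r⁻¹ • p.1, p.2 / r ^ 2) :
      EuclideanSpace ℝ (Fin n) × ℝ)) :=
    (measurable_fst.const_smul r⁻¹).prodMk (measurable_snd.div_const _)
  have h1 : Measure.map (fun q : EuclideanSpace ℝ (Fin n) × ℝ => ((x - q.1, t - q.2) :
      EuclideanSpace ℝ (Fin n) × ℝ)) volume = volume := by
    rw [Measure.volume_eq_prod]
    exact ((Measure.measurePreserving_sub_left volume x).prod (Measure.measurePreserving_sub_left volume t)).map_eq
  have h2 : Measure.map (fun p : EuclideanSpace ℝ (Fin n) × ℝ => ((r⁻¹ • p.1, p.2 / r ^ 2) :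
      EuclideanSpace ℝ (Fin n) × ℝ)) volume = ENNReal.ofReal (r ^ (n + 2)) • volume := by
    rw [Measure.volume_eq_prod]
    have hpm : (fun p : EuclideanSpace ℝ (Fin n) × ℝ => ((r⁻¹ • p.1, p.2 / r ^ 2) :
        EuclideanSpace ℝ (Fin n) × ℝ))
        = Prod.map (fun y : EuclideanSpace ℝ (Fin n) => r⁻¹ • y) (fun s : ℝ => s / r ^ 2) := rfl
    rw [hpm, ← Measure.map_prod_map _ _ (measurable_const_smul r⁻¹)
      (by fun_prop : Measurable fun s : ℝ => s / r ^ 2)]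
    have hsm : Measure.map (fun y : EuclideanSpace ℝ (Fin n) => r⁻¹ • y) volume
        = ENNReal.ofReal (r ^ n) • volume := by
      rw [Measure.map_addHaar_smul volume (inv_ne_zero hr.ne')]
      congr 1
      rw [finrank_euclideanSpace_fin]
      rw [← inv_pow, inv_inv, abs_of_pos (pow_pos hr n)]
    have hre : Measure.map (fun s : ℝ => s / r ^ 2) volume
        = ENNReal.ofReal (r ^ 2) • volume := by
      have : (fun s : ℝ => s / r ^ 2) = fun s : ℝ => (r ^ 2)⁻¹ * s := by
        funext s; rw [div_eq_inv_mul]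
      rw [this, Real.map_volume_mul_left (inv_ne_zero hr2.ne')]
      rw [inv_inv, abs_of_pos hr2]
    rw [hsm, hre, ctrw_smul_prod volume volume _ _
      (by simp [ENNReal.ofReal_eq_zero, not_le, pow_pos hr n]) ENNReal.ofReal_ne_top
      (by simp [ENNReal.ofReal_eq_zero, not_le, hr2, hr.ne']) ENNReal.ofReal_ne_top]
    rw [← ENNReal.ofReal_mul (le_of_lt (pow_pos hr n)), ← pow_add]
  have hcomp : (fun q : EuclideanSpace ℝ (Fin n) × ℝ =>
      ((r⁻¹ • (x - q.1), (t - q.2) / r ^ 2) : EuclideanSpace ℝ (Fin n) × ℝ))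
      = (fun p : EuclideanSpace ℝ (Fin n) × ℝ => ((r⁻¹ • p.1, p.2 / r ^ 2) :
        EuclideanSpace ℝ (Fin n) × ℝ)) ∘ (fun q => (x - q.1, t - q.2)) := rfl
  rw [hcomp, ← Measure.map_map houter hinner, h1, h2]

lemma ctrw_comp_phi (n : ℕ) {r : ℝ} (hr : 0 < r) (x : EuclideanSpace ℝ (Fin n)) (t : ℝ)
    {g : EuclideanSpace ℝ (Fin n) × ℝ → ℝ} (hg : Integrable g) :
    Integrable (fun q : EuclideanSpace ℝ (Fin n) × ℝ => g (r⁻¹ • (x - q.1), (t - q.2) / r ^ 2))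
      ∧ (∫ q : EuclideanSpace ℝ (Fin n) × ℝ, g (r⁻¹ • (x - q.1), (t - q.2) / r ^ 2))
        = r ^ (n + 2) * ∫ p, g p := by
  have hrn : (0:ℝ) < r ^ (n + 2) := pow_pos hr _
  have hr2 : (0:ℝ) < r ^ 2 := by positivity
  let e₁ : EuclideanSpace ℝ (Fin n) ≃ₜ EuclideanSpace ℝ (Fin n) :=
    (Homeomorph.subLeft x).trans (Homeomorph.smulOfNeZero r⁻¹ (inv_ne_zero hr.ne'))
  let e₂ : ℝ ≃ₜ ℝ :=
    (Homeomorph.subLeft t).trans (Homeomorph.mulRight₀ (r ^ 2)⁻¹ (inv_ne_zero hr2.ne'))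
  have hΦeq : (⇑(e₁.prodCongr e₂)) = fun q : EuclideanSpace ℝ (Fin n) × ℝ =>
      ((r⁻¹ • (x - q.1), (t - q.2) / r ^ 2) : EuclideanSpace ℝ (Fin n) × ℝ) := by
    funext q
    simp [e₁, e₂, div_eq_mul_inv, Prod.map, Homeomorph.smulOfNeZero,
      Units.smul_def]
  have hembed : MeasurableEmbedding (fun q : EuclideanSpace ℝ (Fin n) × ℝ =>
      ((r⁻¹ • (x - q.1), (t - q.2) / r ^ 2) : EuclideanSpace ℝ (Fin n) × ℝ)) := by
    rw [← hΦeq]; exact (e₁.prodCongr e₂).measurableEmbedding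
  have hmap := ctrw_map_phi n hr x t
  constructor
  · have h1 : Integrable g (Measure.map (fun q : EuclideanSpace ℝ (Fin n) × ℝ =>
        ((r⁻¹ • (x - q.1), (t - q.2) / r ^ 2) : EuclideanSpace ℝ (Fin n) × ℝ)) volume) := by
      rw [hmap]
      exact (integrable_smul_measure (by simp [ENNReal.ofReal_eq_zero, not_le, hrn])
        ENNReal.ofReal_ne_top).mpr hg
    exact hembed.integrable_map_iff.mp h1
  · have h2 := hembed.integral_map (μ := volume) g
    rw [hmap, integral_smul_measure, ENNReal.toReal_ofReal hrn.le, smul_eq_mul] at h2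
    exact h2.symm
/-- **Uniform closeness of the rescaled solutions to the initial datum on `[0, α r²]`.**
Let `J` be a nonnegative, integrable, compactly supported space-time probability
density on `ℝⁿ × ℝ` supported in `{t ≥ 0}`, set `α = sup{β : ∬_{s ≤ β} J < 1}`,
and for `r > 0` let `J_r(x,t) = r^{-(n+2)} J(x/r, t/r²)`. For `0 < γ ≤ 1` there
is a constant `C > 0`, depending only on `J` and `γ`, such that for every `r > 0`
and every `f ∈ C^{0,γ} ∩ L^∞(ℝⁿ)` with Hölder constant `K`, the (unique) bounded
continuous solution `u(J_r,f)` of `u = J_r ∗ ū` with past data `f` satisfies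
`|u(J_r,f)(x,t) − f(x)| ≤ C K r^γ` for all `(x,t) ∈ ℝⁿ × [0, α r²]`. -/
theorem ctrw_rescaled_holder_estimate
    (n : ℕ) (hn : 1 ≤ n)
    (J : EuclideanSpace ℝ (Fin n) × ℝ → ℝ)
    (hJsupp : ∀ p : EuclideanSpace ℝ (Fin n) × ℝ, p.2 < 0 → J p = 0)
    (hJnonneg : ∀ p, 0 ≤ J p)
    (hJmeas : Measurable J)
    (hJint : Integrable J)
    (hJone : ∫ p : EuclideanSpace ℝ (Fin n) × ℝ, J p = 1)
    (hJcpt : HasCompactSupport J)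
    (γ : ℝ≥0) (hγ0 : 0 < γ) (hγ1 : γ ≤ 1) :
    ∃ C : ℝ, 0 < C ∧
      ∀ r : ℝ, 0 < r →
        ∀ (f : EuclideanSpace ℝ (Fin n) → ℝ) (K : ℝ≥0),
          HolderWith K γ f →
          (∃ M : ℝ, ∀ x, |f x| ≤ M) →
          ∀ u : EuclideanSpace ℝ (Fin n) × ℝ → ℝ,
            (∀ (y : EuclideanSpace ℝ (Fin n)) (s : ℝ), s < 0 → u (y, s) = f y) →
            ContinuousOn u {p : EuclideanSpace ℝ (Fin n) × ℝ | 0 ≤ p.2} →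
            (∃ M : ℝ, ∀ p : EuclideanSpace ℝ (Fin n) × ℝ, 0 ≤ p.2 → |u p| ≤ M) →
            (∀ (x : EuclideanSpace ℝ (Fin n)) (t : ℝ), 0 ≤ t →
              u (x, t) = ∫ q : EuclideanSpace ℝ (Fin n) × ℝ,
                (r ^ (n + 2))⁻¹ * J (r⁻¹ • (x - q.1), (t - q.2) / r ^ 2) * u q) →
            ∀ (x : EuclideanSpace ℝ (Fin n)) (t : ℝ), 0 ≤ t →
              t ≤ (sSup {β : ℝ |
                    ∫ q in {q : EuclideanSpace ℝ (Fin n) × ℝ | q.2 ≤ β}, J q < 1}) * r ^ 2 →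
              |u (x, t) - f x| ≤ C * K * r ^ (γ : ℝ) := by
  classical
  obtain ⟨Rb, hRb⟩ := hJcpt.isBounded.subset_closedBall (0 : EuclideanSpace ℝ (Fin n) × ℝ)
  set R0 : ℝ := |Rb| + 1 with hR0def
  have hR0pos : (0:ℝ) < R0 := by positivity
  have hJvanish : ∀ p : EuclideanSpace ℝ (Fin n) × ℝ, R0 ≤ ‖p‖ → J p = 0 := by
    intro p hp
    by_contra h
    have h1 : p ∈ tsupport J := subset_tsupport J (by simpa [Function.mem_support] using h)
    have h2 := hRb h1
    rw [Metric.mem_closedBall, dist_zero_right] at h2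
    have := le_abs_self Rb
    linarith
  -- the exponential weight θ
  set θ : ℝ := ∫ p : EuclideanSpace ℝ (Fin n) × ℝ, J p * Real.exp (-p.2) with hθdef
  have hgmeas : Measurable fun p : EuclideanSpace ℝ (Fin n) × ℝ => J p * Real.exp (-p.2) :=
    hJmeas.mul (Real.measurable_exp.comp measurable_snd.neg)
  have hgbound : ∀ p : EuclideanSpace ℝ (Fin n) × ℝ,
      ‖J p * Real.exp (-p.2)‖ ≤ ‖J p‖ := by
    intro p
    rcases lt_or_ge p.2 0 with h | h
    · simp [hJsupp p h]
    · rw [Real.norm_eq_abs, Real.norm_eq_abs, abs_mul, abs_of_pos (Real.exp_pos _)]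
      have h1 : Real.exp (-p.2) ≤ 1 := Real.exp_le_one_iff.mpr (by linarith)
      nlinarith [abs_nonneg (J p)]
  have hgint : Integrable (fun p : EuclideanSpace ℝ (Fin n) × ℝ => J p * Real.exp (-p.2)) :=
    hJint.mono hgmeas.aestronglyMeasurable (ae_of_all _ hgbound)
  have hθ0 : 0 ≤ θ :=
    integral_nonneg fun p => mul_nonneg (hJnonneg p) (Real.exp_pos _).le
  have hθ1 : θ < 1 := by
    have hnn : ∀ p : EuclideanSpace ℝ (Fin n) × ℝ,
        0 ≤ J p - J p * Real.exp (-p.2) := by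
      intro p
      rcases lt_or_ge p.2 0 with h | h
      · simp [hJsupp p h]
      · have h1 : Real.exp (-p.2) ≤ 1 := Real.exp_le_one_iff.mpr (by linarith)
        nlinarith [hJnonneg p]
    have hint : Integrable (fun p : EuclideanSpace ℝ (Fin n) × ℝ =>
        J p - J p * Real.exp (-p.2)) := hJint.sub hgint
    have hpos : 0 < ∫ p : EuclideanSpace ℝ (Fin n) × ℝ, (J p - J p * Real.exp (-p.2)) := by
      rw [integral_pos_iff_support_of_nonneg hnn hint]
      have hnull : (volume : Measure (EuclideanSpace ℝ (Fin n) × ℝ))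
          {p : EuclideanSpace ℝ (Fin n) × ℝ | p.2 = 0} = 0 := by
        have : {p : EuclideanSpace ℝ (Fin n) × ℝ | p.2 = 0}
            = (Set.univ : Set (EuclideanSpace ℝ (Fin n))) ×ˢ ({0} : Set ℝ) := by
          ext ⟨y, s⟩
          simp [eq_comm]
        rw [this, Measure.volume_eq_prod, Measure.prod_prod]
        simp
      have hsubset : Function.support J ⊆
          Function.support (fun p : EuclideanSpace ℝ (Fin n) × ℝ =>
            J p - J p * Real.exp (-p.2)) ∪ {p | p.2 = 0} := by
        intro p hp
        rcases lt_or_ge p.2 0 with h | h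
        · exact absurd (hJsupp p h) hp
        rcases eq_or_lt_of_le h with h0 | h0
        · exact Or.inr (by simpa using h0.symm)
        · left
          have h1 : Real.exp (-p.2) < 1 := by
            rw [← Real.exp_zero]; exact Real.exp_lt_exp.mpr (by linarith)
          have h2 : 0 < J p := lt_of_le_of_ne (hJnonneg p) (Ne.symm hp)
          simp only [Function.mem_support]
          nlinarith
      have hJpos : 0 < (volume : Measure (EuclideanSpace ℝ (Fin n) × ℝ))
          (Function.support J) := by
        by_contra h
        push_neg at h
        have h0 : (volume : Measure (EuclideanSpace ℝ (Fin n) × ℝ))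
            (Function.support J) = 0 := le_antisymm h zero_le
        have hae : J =ᵐ[volume] (fun _ => (0:ℝ)) := by
          have h4 : ∀ᵐ p : EuclideanSpace ℝ (Fin n) × ℝ ∂volume,
              p ∉ Function.support J := (measure_eq_zero_iff_ae_notMem).mp h0
          filter_upwards [h4] with p hp
          simpa [Function.mem_support, not_not] using hp
        have h5 : (1:ℝ) = 0 := by
          rw [← hJone, integral_congr_ae hae, integral_zero]
        norm_num at h5
      calc (0:ENNReal) < volume (Function.support J) := hJpos
      _ ≤ volume (Function.support (fun p : EuclideanSpace ℝ (Fin n) × ℝ =>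
            J p - J p * Real.exp (-p.2)) ∪ {p | p.2 = 0}) := measure_mono hsubset
      _ ≤ volume (Function.support (fun p : EuclideanSpace ℝ (Fin n) × ℝ =>
            J p - J p * Real.exp (-p.2))) + volume {p : EuclideanSpace ℝ (Fin n) × ℝ | p.2 = 0} :=
          measure_union_le _ _
      _ = volume (Function.support (fun p : EuclideanSpace ℝ (Fin n) × ℝ =>
            J p - J p * Real.exp (-p.2))) := by rw [hnull, add_zero]
    have hdiff : ∫ p : EuclideanSpace ℝ (Fin n) × ℝ, (J p - J p * Real.exp (-p.2)) = 1 - θ := by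
      rw [integral_sub hJint hgint, hJone, hθdef]
    linarith [hdiff ▸ hpos]
  -- bound on α
  set α : ℝ := sSup {β : ℝ |
      ∫ q in {q : EuclideanSpace ℝ (Fin n) × ℝ | q.2 ≤ β}, J q < 1} with hαdef
  have hαR0 : α ≤ R0 := by
    apply Real.sSup_le _ hR0pos.le
    intro β hβ
    simp only [Set.mem_setOf_eq] at hβ
    by_contra hc
    push_neg at hc
    have hms : MeasurableSet {q : EuclideanSpace ℝ (Fin n) × ℝ | q.2 ≤ β} :=
      measurableSet_le measurable_snd measurable_const
    have hz : ∫ q in {q : EuclideanSpace ℝ (Fin n) × ℝ | q.2 ≤ β}ᶜ, J q = 0 := by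
      apply setIntegral_eq_zero_of_forall_eq_zero
      intro q hq
      apply hJvanish
      have h1 : β < q.2 := not_le.mp hq
      have h2 : |q.2| ≤ ‖q‖ := by
        rw [← Real.norm_eq_abs]; exact norm_snd_le q
      have := le_abs_self q.2
      linarith
    have hsum := integral_add_compl hms hJint (f := J)
    rw [hz, add_zero, hJone] at hsum
    rw [hsum] at hβ
    exact lt_irrefl _ hβ
  have h1θ : (0:ℝ) < 1 - θ := by linarith
  refine ⟨Real.exp R0 * R0 ^ (γ:ℝ) / (1 - θ),
    div_pos (mul_pos (Real.exp_pos _) (Real.rpow_pos_of_pos hR0pos _)) h1θ, ?_⟩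
  intro r hr f K hf hfbdd u hupast hucont hubdd hueq x t ht0 htα
  obtain ⟨Mf, hMf⟩ := hfbdd
  obtain ⟨Mu, hMu⟩ := hubdd
  have hr2 : (0:ℝ) < r ^ 2 := by positivity
  have hfc : Continuous f := hf.continuous hγ0
  -- the weighted sup A
  set Aset : Set ℝ := {a | ∃ y s, 0 ≤ s ∧ s ≤ α * r ^ 2 ∧
      a = Real.exp (-(s / r ^ 2)) * |u (y, s) - f y|} with hAsetdef
  have hAne : Aset.Nonempty := ⟨_, x, t, ht0, htα, rfl⟩
  have hMb : ∀ q : EuclideanSpace ℝ (Fin n) × ℝ, |u q| ≤ max Mu Mf := by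
    intro q
    rcases le_or_gt 0 q.2 with h | h
    · exact le_trans (hMu q h) (le_max_left _ _)
    · have h1 : u q = f q.1 := by
        have := hupast q.1 q.2 h
        rwa [Prod.mk.eta] at this
      rw [h1]; exact le_trans (hMf q.1) (le_max_right _ _)
  have hbd : ∀ a ∈ Aset, a ≤ max Mu Mf + Mf := by
    rintro a ⟨y, s, hs0, hsα, rfl⟩
    have h1 : Real.exp (-(s / r ^ 2)) ≤ 1 :=
      Real.exp_le_one_iff.mpr (neg_nonpos.mpr (div_nonneg hs0 hr2.le))
    have h2 : |u (y, s) - f y| ≤ max Mu Mf + Mf := by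
      calc |u (y, s) - f y| ≤ |u (y, s)| + |f y| := abs_sub _ _
      _ ≤ max Mu Mf + Mf := add_le_add (hMb (y, s)) (hMf y)
    calc Real.exp (-(s / r ^ 2)) * |u (y, s) - f y|
        ≤ 1 * (max Mu Mf + Mf) := mul_le_mul h1 h2 (abs_nonneg _) zero_le_one
    _ = max Mu Mf + Mf := one_mul _
  have hAbdd : BddAbove Aset := ⟨max Mu Mf + Mf, hbd⟩
  set A : ℝ := sSup Aset with hAdef
  have hA0 : 0 ≤ A := by
    obtain ⟨a, ha⟩ := hAne
    have ha0 : 0 ≤ a := by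
      obtain ⟨y, s, _, _, rfl⟩ := ha
      positivity
    exact le_trans ha0 (le_csSup hAbdd ha)
  -- measurability of u
  have hSmeas : MeasurableSet {p : EuclideanSpace ℝ (Fin n) × ℝ | 0 ≤ p.2} :=
    measurableSet_le measurable_const measurable_snd
  have hmu : AEStronglyMeasurable u (volume : Measure (EuclideanSpace ℝ (Fin n) × ℝ)) := by
    have h1 : AEMeasurable u (volume.restrict {p : EuclideanSpace ℝ (Fin n) × ℝ | 0 ≤ p.2}) :=
      hucont.aemeasurable hSmeas
    have h2 : AEMeasurable u (volume.restrict {p : EuclideanSpace ℝ (Fin n) × ℝ | 0 ≤ p.2}ᶜ) := by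
      refine AEMeasurable.congr ((hfc.measurable.comp measurable_fst).aemeasurable) ?_
      refine (ae_restrict_iff' hSmeas.compl).2 (ae_of_all _ ?_)
      intro p hp
      have h3 : p.2 < 0 := not_le.mp hp
      have := hupast p.1 p.2 h3
      rw [Prod.mk.eta] at this
      exact this.symm
    have h3 := h1.add_measure h2
    rw [Measure.restrict_add_restrict_compl hSmeas] at h3
    exact h3.aestronglyMeasurable
  -- the key inequality
  have key : ∀ (x' : EuclideanSpace ℝ (Fin n)) (t' : ℝ), 0 ≤ t' → t' ≤ α * r ^ 2 →
      Real.exp (-(t' / r ^ 2)) * |u (x', t') - f x'|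
        ≤ (K : ℝ) * (R0 * r) ^ (γ : ℝ) + θ * A := by
    intro x' t' ht0' htα'
    set KR : ℝ := (K : ℝ) * (R0 * r) ^ (γ:ℝ) with hKRdef
    have hKR0 : 0 ≤ KR :=
      mul_nonneg K.coe_nonneg (Real.rpow_nonneg (by positivity) _)
    set k : EuclideanSpace ℝ (Fin n) × ℝ → ℝ :=
      fun q => (r ^ (n + 2))⁻¹ * J (r⁻¹ • (x' - q.1), (t' - q.2) / r ^ 2) with hkdef
    have hk0 : ∀ q, 0 ≤ k q := fun q => mul_nonneg (by positivity) (hJnonneg _)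
    obtain ⟨hJcompInt, hJcompEq⟩ := ctrw_comp_phi n hr x' t' hJint
    have hkint : Integrable k := hJcompInt.const_mul _
    have hkone : ∫ q, k q = 1 := by
      rw [hkdef]
      rw [integral_const_mul, hJcompEq, hJone, mul_one,
        inv_mul_cancel₀ (pow_pos hr (n + 2)).ne']
    obtain ⟨hgcompInt, hgcompEq⟩ := ctrw_comp_phi n hr x' t' hgint
    have hkerw : (fun q : EuclideanSpace ℝ (Fin n) × ℝ =>
        k q * Real.exp (-((t' - q.2) / r ^ 2)))
        = fun q : EuclideanSpace ℝ (Fin n) × ℝ => (r ^ (n + 2))⁻¹ *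
          ((fun p : EuclideanSpace ℝ (Fin n) × ℝ => J p * Real.exp (-p.2))
            (r⁻¹ • (x' - q.1), (t' - q.2) / r ^ 2)) := by
      funext q
      simp only [hkdef]
      ring
    have hkeint : Integrable (fun q : EuclideanSpace ℝ (Fin n) × ℝ =>
        k q * Real.exp (-((t' - q.2) / r ^ 2))) := by
      rw [hkerw]; exact hgcompInt.const_mul _
    have hkeeq : ∫ q : EuclideanSpace ℝ (Fin n) × ℝ,
        k q * Real.exp (-((t' - q.2) / r ^ 2)) = θ := by
      rw [hkerw, integral_const_mul, hgcompEq, ← hθdef, ← mul_assoc,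
        inv_mul_cancel₀ (pow_pos hr (n + 2)).ne', one_mul]
    have hknz : ∀ q : EuclideanSpace ℝ (Fin n) × ℝ, k q ≠ 0 →
        ‖x' - q.1‖ ≤ R0 * r ∧ 0 ≤ t' - q.2 := by
      intro q hq
      have hJq : J (r⁻¹ • (x' - q.1), (t' - q.2) / r ^ 2) ≠ 0 := by
        intro h
        apply hq
        rw [hkdef]
        simp [h]
      have hnorm : ‖((r⁻¹ • (x' - q.1), (t' - q.2) / r ^ 2) :
          EuclideanSpace ℝ (Fin n) × ℝ)‖ < R0 := by
        by_contra h
        exact hJq (hJvanish _ (not_lt.mp h))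
      constructor
      · have h1 : ‖r⁻¹ • (x' - q.1)‖ ≤ ‖((r⁻¹ • (x' - q.1), (t' - q.2) / r ^ 2) :
            EuclideanSpace ℝ (Fin n) × ℝ)‖ :=
          norm_fst_le ((r⁻¹ • (x' - q.1), (t' - q.2) / r ^ 2) :
            EuclideanSpace ℝ (Fin n) × ℝ)
        rw [norm_smul, Real.norm_eq_abs, abs_of_pos (inv_pos.mpr hr)] at h1
        have h2 : r⁻¹ * ‖x' - q.1‖ ≤ R0 := le_of_lt (lt_of_le_of_lt h1 hnorm)
        calc ‖x' - q.1‖ = r * (r⁻¹ * ‖x' - q.1‖) := by field_simp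
        _ ≤ r * R0 := mul_le_mul_of_nonneg_left h2 hr.le
        _ = R0 * r := mul_comm _ _
      · by_contra h
        push_neg at h
        exact hJq (hJsupp _ (div_neg_of_neg_of_pos (by linarith) hr2))
    have hfb2 : ∀ q : EuclideanSpace ℝ (Fin n) × ℝ, k q * |f q.1 - f x'| ≤ k q * KR := by
      intro q
      rcases eq_or_ne (k q) 0 with h | h
      · simp [h]
      · have h1 := (hknz q h).1
        have h2 : |f q.1 - f x'| ≤ KR := by
          have h3 := hf.dist_le (x := q.1) (y := x')
          rw [Real.dist_eq] at h3
          refine le_trans h3 ?_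
          rw [hKRdef]
          refine mul_le_mul_of_nonneg_left ?_ K.coe_nonneg
          refine Real.rpow_le_rpow dist_nonneg ?_ γ.coe_nonneg
          rw [dist_eq_norm, norm_sub_rev]
          exact h1
        exact mul_le_mul_of_nonneg_left h2 (hk0 q)
    have hue : u (x', t') = ∫ q, k q * u q := hueq x' t' ht0'
    have hkuint : Integrable (fun q => k q * u q) := by
      have h1 := hkint.bdd_mul (c := max Mu Mf) hmu (ae_of_all _ fun q => by
        rw [Real.norm_eq_abs]; exact hMb q)
      simpa [mul_comm] using h1
    have hdecomp : u (x', t') - f x' = ∫ q, k q * (u q - f x') := by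
      have h1 : Integrable (fun q => k q * f x') := hkint.mul_const _
      rw [show (fun q => k q * (u q - f x')) = fun q => k q * u q - k q * f x' from
        funext fun q => by ring]
      rw [integral_sub hkuint h1, integral_mul_const, hkone, one_mul, ← hue]
    have habs : Integrable (fun q : EuclideanSpace ℝ (Fin n) × ℝ => k q * |u q - f q.1|) := by
      have hm2 : AEStronglyMeasurable
          (fun q : EuclideanSpace ℝ (Fin n) × ℝ => |u q - f q.1|) volume := by
        have := (hmu.sub ((hfc.comp continuous_fst).aestronglyMeasurable)).norm
        simpa [Real.norm_eq_abs] using this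
      have h1 := hkint.bdd_mul (c := max Mu Mf + Mf) hm2 (ae_of_all _ fun q => by
        rw [Real.norm_eq_abs, abs_abs]
        calc |u q - f q.1| ≤ |u q| + |f q.1| := abs_sub _ _
        _ ≤ max Mu Mf + Mf := add_le_add (hMb q) (hMf q.1))
      simpa [mul_comm] using h1
    set G : EuclideanSpace ℝ (Fin n) × ℝ → ℝ :=
      Set.indicator {q : EuclideanSpace ℝ (Fin n) × ℝ | 0 ≤ q.2}
        (fun q => k q * |u q - f q.1|) with hGdef
    have hGint : Integrable G := habs.indicator hSmeas
    have hpoint : ∀ q : EuclideanSpace ℝ (Fin n) × ℝ,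
        ‖k q * (u q - f x')‖ ≤ k q * KR + G q := by
      intro q
      rw [Real.norm_eq_abs, abs_mul, abs_of_nonneg (hk0 q)]
      rcases le_or_gt 0 q.2 with h | h
      · have hGq : G q = k q * |u q - f q.1| :=
          Set.indicator_of_mem
            (show q ∈ {q : EuclideanSpace ℝ (Fin n) × ℝ | 0 ≤ q.2} from h) _
        rw [hGq]
        have h1 : |u q - f x'| ≤ |f q.1 - f x'| + |u q - f q.1| := by
          have h2 : u q - f x' = (u q - f q.1) + (f q.1 - f x') := by ring
          rw [h2]
          exact le_trans (abs_add_le _ _) (by rw [add_comm])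
        calc k q * |u q - f x'| ≤ k q * (|f q.1 - f x'| + |u q - f q.1|) :=
            mul_le_mul_of_nonneg_left h1 (hk0 q)
        _ = k q * |f q.1 - f x'| + k q * |u q - f q.1| := by ring
        _ ≤ k q * KR + k q * |u q - f q.1| := by linarith [hfb2 q]
      · have hGq : G q = 0 :=
          Set.indicator_of_notMem
            (show q ∉ {q : EuclideanSpace ℝ (Fin n) × ℝ | 0 ≤ q.2} by
              simpa using not_le.mpr h) _
        rw [hGq, add_zero]
        have huq : u q = f q.1 := by
          have := hupast q.1 q.2 h
          rwa [Prod.mk.eta] at this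
        rw [huq]
        exact hfb2 q
    have hbint : Integrable (fun q => k q * KR + G q) := (hkint.mul_const _).add hGint
    have hnorm : |u (x', t') - f x'| ≤ ∫ q, (k q * KR + G q) := by
      rw [hdecomp, ← Real.norm_eq_abs]
      exact norm_integral_le_of_norm_le hbint (ae_of_all _ hpoint)
    have hsplit : ∫ q, (k q * KR + G q)
        = KR + (∫ q in {q : EuclideanSpace ℝ (Fin n) × ℝ | 0 ≤ q.2}, k q * |u q - f q.1|) := by
      rw [integral_add (hkint.mul_const _) hGint, integral_mul_const, hkone, one_mul,
        hGdef, integral_indicator hSmeas]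
    set ee : ℝ := Real.exp (-(t' / r ^ 2)) with heedef
    have hee0 : (0:ℝ) < ee := Real.exp_pos _
    have hee1 : ee ≤ 1 :=
      Real.exp_le_one_iff.mpr (neg_nonpos.mpr (div_nonneg ht0' hr2.le))
    have hstep : ∀ q ∈ {q : EuclideanSpace ℝ (Fin n) × ℝ | 0 ≤ q.2},
        ee * (k q * |u q - f q.1|)
          ≤ k q * Real.exp (-((t' - q.2) / r ^ 2)) * A := by
      intro q hq
      rcases eq_or_ne (k q) 0 with h | h
      · simp [h]
      · have h2 := (hknz q h).2
        have hq2 : (0:ℝ) ≤ q.2 := hq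
        have hmem : Real.exp (-(q.2 / r ^ 2)) * |u (q.1, q.2) - f q.1| ∈ Aset :=
          ⟨q.1, q.2, hq2, by linarith, rfl⟩
        have hle := le_csSup hAbdd hmem
        rw [Prod.mk.eta] at hle
        have heq : ee = Real.exp (-((t' - q.2) / r ^ 2)) * Real.exp (-(q.2 / r ^ 2)) := by
          rw [heedef, ← Real.exp_add]
          congr 1
          field_simp
          ring
        calc ee * (k q * |u q - f q.1|)
            = k q * Real.exp (-((t' - q.2) / r ^ 2)) *
              (Real.exp (-(q.2 / r ^ 2)) * |u q - f q.1|) := by rw [heq]; ring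
        _ ≤ k q * Real.exp (-((t' - q.2) / r ^ 2)) * A :=
            mul_le_mul_of_nonneg_left hle (mul_nonneg (hk0 q) (Real.exp_pos _).le)
    have hsetint : (∫ q in {q : EuclideanSpace ℝ (Fin n) × ℝ | 0 ≤ q.2},
        ee * (k q * |u q - f q.1|))
        ≤ ∫ q in {q : EuclideanSpace ℝ (Fin n) × ℝ | 0 ≤ q.2},
            k q * Real.exp (-((t' - q.2) / r ^ 2)) * A := by
      refine setIntegral_mono_on ((habs.const_mul ee).integrableOn)
        ((hkeint.mul_const A).integrableOn) hSmeas hstep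
    have hpull : ee * (∫ q in {q : EuclideanSpace ℝ (Fin n) × ℝ | 0 ≤ q.2},
        k q * |u q - f q.1|)
        = ∫ q in {q : EuclideanSpace ℝ (Fin n) × ℝ | 0 ≤ q.2},
            ee * (k q * |u q - f q.1|) := (integral_const_mul _ _).symm
    have hA2 : (∫ q in {q : EuclideanSpace ℝ (Fin n) × ℝ | 0 ≤ q.2},
        k q * Real.exp (-((t' - q.2) / r ^ 2)) * A) ≤ θ * A := by
      rw [integral_mul_const]
      have h1 : (∫ q in {q : EuclideanSpace ℝ (Fin n) × ℝ | 0 ≤ q.2},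
          k q * Real.exp (-((t' - q.2) / r ^ 2))) ≤ θ := by
        rw [← hkeeq]
        exact setIntegral_le_integral hkeint
          (ae_of_all _ fun q => mul_nonneg (hk0 q) (Real.exp_pos _).le)
      exact mul_le_mul_of_nonneg_right h1 hA0
    calc ee * |u (x', t') - f x'|
        ≤ ee * (KR + ∫ q in {q : EuclideanSpace ℝ (Fin n) × ℝ | 0 ≤ q.2},
            k q * |u q - f q.1|) :=
          mul_le_mul_of_nonneg_left (le_of_le_of_eq hnorm hsplit) hee0.le
    _ = ee * KR + ee * (∫ q in {q : EuclideanSpace ℝ (Fin n) × ℝ | 0 ≤ q.2},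
          k q * |u q - f q.1|) := by ring
    _ ≤ KR + θ * A := by
        refine add_le_add (mul_le_of_le_one_left hKR0 hee1) ?_
        · rw [hpull]
          exact le_trans hsetint hA2
  -- conclude
  have hKR0' : (0:ℝ) ≤ (K : ℝ) * (R0 * r) ^ (γ:ℝ) :=
    mul_nonneg K.coe_nonneg (Real.rpow_nonneg (by positivity) _)
  have hAle : A ≤ (K : ℝ) * (R0 * r) ^ (γ:ℝ) + θ * A := by
    apply Real.sSup_le
    · rintro a ⟨y, s, hs0, hsα, rfl⟩
      exact key y s hs0 hsα
    · exact add_nonneg hKR0' (mul_nonneg hθ0 hA0)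
  have hAfin : A ≤ (K : ℝ) * (R0 * r) ^ (γ:ℝ) / (1 - θ) := by
    rw [le_div_iff₀ h1θ]
    have h2 : A * (1 - θ) = A - θ * A := by ring
    rw [h2]
    linarith
  have hmem : Real.exp (-(t / r ^ 2)) * |u (x, t) - f x| ≤ A :=
    le_csSup hAbdd ⟨x, t, ht0, htα, rfl⟩
  have htR0 : t / r ^ 2 ≤ R0 := le_trans ((div_le_iff₀ hr2).mpr htα) hαR0
  have hfinal : |u (x, t) - f x|
      = Real.exp (t / r ^ 2) * (Real.exp (-(t / r ^ 2)) * |u (x, t) - f x|) := by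
    rw [← mul_assoc, ← Real.exp_add]
    simp
  calc |u (x, t) - f x|
      = Real.exp (t / r ^ 2) * (Real.exp (-(t / r ^ 2)) * |u (x, t) - f x|) := hfinal
  _ ≤ Real.exp R0 * A := by
      refine mul_le_mul (Real.exp_le_exp.mpr htR0) hmem (by positivity) (Real.exp_pos _).le
  _ ≤ Real.exp R0 * ((K : ℝ) * (R0 * r) ^ (γ:ℝ) / (1 - θ)) :=
      mul_le_mul_of_nonneg_left hAfin (Real.exp_pos _).le
  _ = Real.exp R0 * R0 ^ (γ:ℝ) / (1 - θ) * K * r ^ (γ:ℝ) := by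
      rw [Real.mul_rpow hR0pos.le hr.le]
      field_simp
end

section
/- Let n ≥ 1 and let J : ℝⁿ × ℝ → ℝ be a measurable kernel satisfying: supp J ⊂ ℝⁿ × [0,∞); J ≥ 0; J ∈ L¹(ℝ^{n+1}) with ∬ J = 1; and J has compact support. Set α = sup{β : ∬_{s ≤ β} J(y,s) dy ds < 1} and τ = ∬_{0 < s ≤ α/2} J(z,s) dz ds. Then 0 < α < ∞, τ < 1, and for every t ∈ [0, α/2] and every x ∈ ℝⁿ, ∬_{0 < s ≤ α/2} J(x−y, t−s) dy ds ≤ τ. Consequently the map T₁ defined on bounded continuous functions v on ℝⁿ × [0, α/2] by T₁v(x,t) = ∬ J(x−y, t−s) v̄(y,s) dy ds, with v̄ = f for s < 0 and v̄ = v for 0 ≤ s ≤ α/2 (f ∈ L^∞(ℝⁿ) fixed), satisfies ‖T₁v − T₁w‖_∞ ≤ τ ‖v − w‖_∞ for all bounded continuous v, w on ℝⁿ × [0, α/2]. -/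
open MeasureTheory Real

/-- **Contractivity of the first-slab solution operator `T₁`.**
Let `J` be a nonnegative, integrable, compactly supported space-time probability
density on `ℝⁿ × ℝ` supported in `{t ≥ 0}`, with
`α = sup{β : ∬_{s ≤ β} J < 1}` and `τ = ∬_{0 < s ≤ α/2} J`. Then `0 < α < ∞`,
`τ < 1`, `∬_{0 < s ≤ α/2} J(x−y, t−s) dy ds ≤ τ` for every `t ∈ [0, α/2]` and
`x ∈ ℝⁿ`, and the operator `T₁v(x,t) = ∬ J(x−y,t−s) v̄(y,s) dy ds` (with `v̄ = f`
for `s < 0` and `v̄ = v` for `s ≥ 0`) satisfies `‖T₁v − T₁w‖_∞ ≤ τ ‖v − w‖_∞` on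
`ℝⁿ × [0, α/2]` for bounded continuous `v, w`. -/
theorem ctrw_first_slab_operator_contractive
    (n : ℕ) (hn : 1 ≤ n)
    (J : EuclideanSpace ℝ (Fin n) × ℝ → ℝ)
    (hJsupp : ∀ p : EuclideanSpace ℝ (Fin n) × ℝ, p.2 < 0 → J p = 0)
    (hJnonneg : ∀ p, 0 ≤ J p)
    (hJmeas : Measurable J)
    (hJint : Integrable J)
    (hJone : ∫ p : EuclideanSpace ℝ (Fin n) × ℝ, J p = 1)
    (hJcpt : HasCompactSupport J)
    (f : EuclideanSpace ℝ (Fin n) → ℝ)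
    (hfmeas : Measurable f)
    (hfbdd : ∃ M : ℝ, ∀ x, |f x| ≤ M) :
    let α := sSup {β : ℝ | ∫ q in {q : EuclideanSpace ℝ (Fin n) × ℝ | q.2 ≤ β}, J q < 1};
    let τ := ∫ q in {q : EuclideanSpace ℝ (Fin n) × ℝ | 0 < q.2 ∧ q.2 ≤ α / 2}, J q;
    0 < α ∧
    BddAbove {β : ℝ | ∫ q in {q : EuclideanSpace ℝ (Fin n) × ℝ | q.2 ≤ β}, J q < 1} ∧
    τ < 1 ∧
    (∀ (x : EuclideanSpace ℝ (Fin n)) (t : ℝ), 0 ≤ t → t ≤ α / 2 →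
      (∫ q in {q : EuclideanSpace ℝ (Fin n) × ℝ | 0 < q.2 ∧ q.2 ≤ α / 2},
          J (x - q.1, t - q.2)) ≤ τ) ∧
    (∀ v w : EuclideanSpace ℝ (Fin n) × ℝ → ℝ,
      Measurable v → Measurable w →
      ContinuousOn v {p : EuclideanSpace ℝ (Fin n) × ℝ | 0 ≤ p.2 ∧ p.2 ≤ α / 2} →
      ContinuousOn w {p : EuclideanSpace ℝ (Fin n) × ℝ | 0 ≤ p.2 ∧ p.2 ≤ α / 2} →
      (∃ M : ℝ, ∀ p : EuclideanSpace ℝ (Fin n) × ℝ, |v p| ≤ M) →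
      (∃ M : ℝ, ∀ p : EuclideanSpace ℝ (Fin n) × ℝ, |w p| ≤ M) →
      ∀ M : ℝ,
        (∀ p : EuclideanSpace ℝ (Fin n) × ℝ, 0 ≤ p.2 → p.2 ≤ α / 2 → |v p - w p| ≤ M) →
        ∀ (x : EuclideanSpace ℝ (Fin n)) (t : ℝ), 0 ≤ t → t ≤ α / 2 →
          |(∫ q : EuclideanSpace ℝ (Fin n) × ℝ,
              J (x - q.1, t - q.2) * (if q.2 < 0 then f q.1 else v q)) -
            (∫ q : EuclideanSpace ℝ (Fin n) × ℝ,
              J (x - q.1, t - q.2) * (if q.2 < 0 then f q.1 else w q))| ≤ τ * M) := by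
  classical
  intro α τ
  haveI hNI : (volume : Measure (EuclideanSpace ℝ (Fin n) × ℝ)).IsNegInvariant :=
    ⟨(MeasurePreserving.prod (Measure.measurePreserving_neg _)
        (Measure.measurePreserving_neg _)).map_eq⟩
  haveI hLI : (volume : Measure (EuclideanSpace ℝ (Fin n) × ℝ)).IsAddLeftInvariant :=
    ⟨fun p => ((measurePreserving_add_left volume p.1).prod
        (measurePreserving_add_left volume p.2)).map_eq⟩
  have hnull : (volume : Measure (EuclideanSpace ℝ (Fin n) × ℝ)) {q | q.2 = 0} = 0 := by
    have h : {q : EuclideanSpace ℝ (Fin n) × ℝ | q.2 = 0}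
        = (Set.univ : Set (EuclideanSpace ℝ (Fin n))) ×ˢ ({0} : Set ℝ) := by
      ext ⟨a, b⟩; simp [eq_comm]
    rw [h, Measure.volume_eq_prod, Measure.prod_prod]; simp
  have hae : ∀ᵐ q : EuclideanSpace ℝ (Fin n) × ℝ, q.2 ≠ 0 := by
    rw [ae_iff]; simpa using hnull
  have hIic : ∀ β : ℝ, MeasurableSet {q : EuclideanSpace ℝ (Fin n) × ℝ | q.2 ≤ β} :=
    fun β => measurableSet_le measurable_snd measurable_const
  have hSmeas : MeasurableSet {q : EuclideanSpace ℝ (Fin n) × ℝ | 0 < q.2 ∧ q.2 ≤ α / 2} :=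
    (measurableSet_lt measurable_const measurable_snd).inter
      (measurableSet_le measurable_snd measurable_const)
  obtain ⟨R, hR⟩ := isBounded_iff_forall_norm_le.mp hJcpt.isBounded
  have hzero : ∀ q : EuclideanSpace ℝ (Fin n) × ℝ, R < q.2 → J q = 0 := by
    intro q hq
    by_contra h
    have hmem : q ∈ tsupport J := subset_tsupport J (Function.mem_support.mpr h)
    have h1 : ‖q.2‖ ≤ ‖q‖ := norm_snd_le q
    have h2 := hR q hmem
    rw [Real.norm_eq_abs] at h1
    have h3 := le_trans (le_abs_self q.2) (le_trans h1 h2)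
    linarith
  have hF1 : ∀ β : ℝ, R ≤ β →
      (∫ q in {q : EuclideanSpace ℝ (Fin n) × ℝ | q.2 ≤ β}, J q) = 1 := by
    intro β hβ
    rw [setIntegral_eq_integral_of_forall_compl_eq_zero, hJone]
    intro q hq
    exact hzero q (lt_of_le_of_lt hβ (not_le.mp hq))
  have hbdd : BddAbove
      {β : ℝ | ∫ q in {q : EuclideanSpace ℝ (Fin n) × ℝ | q.2 ≤ β}, J q < 1} := by
    refine ⟨R, fun β hβ => ?_⟩
    by_contra h
    push_neg at h
    rw [Set.mem_setOf_eq, hF1 β h.le] at hβ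
    exact lt_irrefl 1 hβ
  have hlim0 : Filter.Tendsto
      (fun k : ℕ => ∫ q, ({q : EuclideanSpace ℝ (Fin n) × ℝ | q.2 ≤ 1 / (k + 1)}.indicator J) q)
      Filter.atTop (nhds (∫ _q : EuclideanSpace ℝ (Fin n) × ℝ, (0 : ℝ))) := by
    refine tendsto_integral_of_dominated_convergence J
      (fun k => (hJmeas.indicator (hIic _)).aestronglyMeasurable) hJint (fun k => ?_) ?_
    · refine Filter.Eventually.of_forall fun q => ?_
      rw [Real.norm_eq_abs, abs_of_nonneg (Set.indicator_nonneg (fun p _ => hJnonneg p) q)]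
      exact Set.indicator_le_self' (fun p _ => hJnonneg p) q
    · filter_upwards [hae] with q hq
      rcases lt_or_gt_of_ne hq with hneg | hpos
      · have heq : ∀ k : ℕ,
            ({q : EuclideanSpace ℝ (Fin n) × ℝ | q.2 ≤ 1 / (k + 1)}.indicator J) q = 0 := by
          intro k
          by_cases hmem : q ∈ {q : EuclideanSpace ℝ (Fin n) × ℝ | q.2 ≤ 1 / (k + 1)}
          · rw [Set.indicator_of_mem hmem, hJsupp q hneg]
          · exact Set.indicator_of_notMem hmem J
        exact Filter.Tendsto.congr (fun kk => (heq kk).symm) tendsto_const_nhds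
      · have hev : ∀ᶠ k : ℕ in Filter.atTop, (1 : ℝ) / (k + 1) < q.2 :=
          tendsto_one_div_add_atTop_nhds_zero_nat.eventually (gt_mem_nhds hpos)
        refine Filter.Tendsto.congr' ?_ (tendsto_const_nhds :
          Filter.Tendsto (fun _ : ℕ => (0 : ℝ)) Filter.atTop (nhds 0))
        filter_upwards [hev] with k hk
        exact (Set.indicator_of_notMem (by simpa using not_le.mpr hk) J).symm
  obtain ⟨k, hk⟩ : ∃ k : ℕ,
      (∫ q in {q : EuclideanSpace ℝ (Fin n) × ℝ | q.2 ≤ 1 / (k + 1)}, J q) < 1 := by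
    have hlim' : Filter.Tendsto
        (fun k : ℕ => ∫ q, ({q : EuclideanSpace ℝ (Fin n) × ℝ | q.2 ≤ 1 / (k + 1)}.indicator J) q)
        Filter.atTop (nhds 0) := by simpa using hlim0
    obtain ⟨k, hk⟩ := (hlim'.eventually (gt_mem_nhds one_pos)).exists
    exact ⟨k, by rwa [integral_indicator (hIic _)] at hk⟩
  have hk1pos : (0 : ℝ) < 1 / (k + 1) := by positivity
  have hαpos : 0 < α := lt_of_lt_of_le hk1pos (le_csSup hbdd hk)
  have hSne : Set.Nonempty
      {β : ℝ | ∫ q in {q : EuclideanSpace ℝ (Fin n) × ℝ | q.2 ≤ β}, J q < 1} := ⟨1 / (k + 1), hk⟩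
  have hFmono : ∀ β γ : ℝ, β ≤ γ →
      (∫ q in {q : EuclideanSpace ℝ (Fin n) × ℝ | q.2 ≤ β}, J q)
        ≤ ∫ q in {q : EuclideanSpace ℝ (Fin n) × ℝ | q.2 ≤ γ}, J q := by
    intro β γ h
    exact setIntegral_mono_set hJint.integrableOn
      (Filter.Eventually.of_forall fun q => hJnonneg q)
      (HasSubset.Subset.eventuallyLE fun q hq => le_trans hq h)
  have hFlt : ∀ β : ℝ, β < α →
      (∫ q in {q : EuclideanSpace ℝ (Fin n) × ℝ | q.2 ≤ β}, J q) < 1 := by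
    intro β hβ
    obtain ⟨γ, hγ, hβγ⟩ := exists_lt_of_lt_csSup hSne hβ
    exact lt_of_le_of_lt (hFmono β γ hβγ.le) hγ
  have hτle : τ ≤ ∫ q in {q : EuclideanSpace ℝ (Fin n) × ℝ | q.2 ≤ α / 2}, J q :=
    setIntegral_mono_set hJint.integrableOn
      (Filter.Eventually.of_forall fun q => hJnonneg q)
      (HasSubset.Subset.eventuallyLE fun q hq => hq.2)
  have hτlt : τ < 1 := lt_of_le_of_lt hτle (hFlt _ (by linarith))
  have part4 : ∀ (x : EuclideanSpace ℝ (Fin n)) (t : ℝ), 0 ≤ t → t ≤ α / 2 →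
      (∫ q in {q : EuclideanSpace ℝ (Fin n) × ℝ | 0 < q.2 ∧ q.2 ≤ α / 2},
        J (x - q.1, t - q.2)) ≤ τ := by
    intro x t ht0 ht1
    have hgmeas : MeasurableSet {p : EuclideanSpace ℝ (Fin n) × ℝ | t - α / 2 ≤ p.2 ∧ p.2 < t} :=
      (measurableSet_le measurable_const measurable_snd).inter
        (measurableSet_lt measurable_snd measurable_const)
    set g : EuclideanSpace ℝ (Fin n) × ℝ → ℝ :=
      ({p : EuclideanSpace ℝ (Fin n) × ℝ | t - α / 2 ≤ p.2 ∧ p.2 < t}).indicator J with hg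
    have key : (∫ q in {q : EuclideanSpace ℝ (Fin n) × ℝ | 0 < q.2 ∧ q.2 ≤ α / 2},
        J (x - q.1, t - q.2)) = ∫ q : EuclideanSpace ℝ (Fin n) × ℝ, g ((x, t) - q) := by
      rw [← integral_indicator hSmeas]
      congr 1
      funext q
      rw [hg]
      by_cases hq : q ∈ {q : EuclideanSpace ℝ (Fin n) × ℝ | 0 < q.2 ∧ q.2 ≤ α / 2}
      · have h1 : 0 < q.2 := hq.1
        have h2 : q.2 ≤ α / 2 := hq.2
        rw [Set.indicator_of_mem hq, Set.indicator_of_mem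
          (show ((x, t) - q) ∈ {p : EuclideanSpace ℝ (Fin n) × ℝ | t - α / 2 ≤ p.2 ∧ p.2 < t} from
            ⟨show t - α / 2 ≤ t - q.2 by linarith, show t - q.2 < t by linarith⟩)]
        rfl
      · rw [Set.indicator_of_notMem hq, Set.indicator_of_notMem]
        intro hc
        have hc1 : t - α / 2 ≤ t - q.2 := hc.1
        have hc2 : t - q.2 < t := hc.2
        exact hq ⟨by linarith, by linarith⟩
    rw [key, integral_sub_left_eq_self g volume (x, t)]
    have hτeq : τ = ∫ q,
        ({q : EuclideanSpace ℝ (Fin n) × ℝ | 0 < q.2 ∧ q.2 ≤ α / 2}).indicator J q :=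
      (integral_indicator hSmeas).symm
    rw [hτeq]
    refine integral_mono_ae (hJint.indicator hgmeas) (hJint.indicator hSmeas) ?_
    filter_upwards [hae] with p hp
    rw [hg]
    by_cases h1 : p ∈ {p : EuclideanSpace ℝ (Fin n) × ℝ | t - α / 2 ≤ p.2 ∧ p.2 < t}
    · rw [Set.indicator_of_mem h1]
      rcases lt_or_gt_of_ne hp with hneg | hpos
      · rw [hJsupp p hneg]
        exact Set.indicator_nonneg (fun q _ => hJnonneg q) p
      · have h2 : p.2 < t := h1.2
        rw [Set.indicator_of_mem
          (show p ∈ {q : EuclideanSpace ℝ (Fin n) × ℝ | 0 < q.2 ∧ q.2 ≤ α / 2} from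
            ⟨hpos, by linarith⟩)]
    · rw [Set.indicator_of_notMem h1]
      exact Set.indicator_nonneg (fun q _ => hJnonneg q) p
  refine ⟨hαpos, hbdd, hτlt, part4, ?_⟩
  intro v w hv hw _ _ hvbdd hwbdd M hM x t ht0 ht1
  obtain ⟨Mv, hMv⟩ := hvbdd
  obtain ⟨Mw, hMw⟩ := hwbdd
  obtain ⟨Mf, hMf⟩ := hfbdd
  have hM0 : 0 ≤ M := le_trans (abs_nonneg _) (hM ((x, 0) : EuclideanSpace ℝ (Fin n) × ℝ)
    le_rfl (by simpa using by linarith))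
  set Jx : EuclideanSpace ℝ (Fin n) × ℝ → ℝ := fun q => J ((x, t) - q) with hJxdef
  have hJxint : Integrable Jx := hJint.comp_sub_left (x, t)
  have hJxnn : ∀ q, 0 ≤ Jx q := fun q => hJnonneg _
  have hcv : Measurable (fun q : EuclideanSpace ℝ (Fin n) × ℝ =>
      if q.2 < 0 then f q.1 else v q) :=
    Measurable.ite (measurableSet_lt measurable_snd measurable_const)
      (hfmeas.comp measurable_fst) hv
  have hcw : Measurable (fun q : EuclideanSpace ℝ (Fin n) × ℝ =>
      if q.2 < 0 then f q.1 else w q) :=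
    Measurable.ite (measurableSet_lt measurable_snd measurable_const)
      (hfmeas.comp measurable_fst) hw
  have hbv : ∀ q : EuclideanSpace ℝ (Fin n) × ℝ,
      ‖if q.2 < 0 then f q.1 else v q‖ ≤ max Mf Mv := by
    intro q; rw [Real.norm_eq_abs]; split_ifs
    · exact le_trans (hMf _) (le_max_left _ _)
    · exact le_trans (hMv _) (le_max_right _ _)
  have hbw : ∀ q : EuclideanSpace ℝ (Fin n) × ℝ,
      ‖if q.2 < 0 then f q.1 else w q‖ ≤ max Mf Mw := by
    intro q; rw [Real.norm_eq_abs]; split_ifs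
    · exact le_trans (hMf _) (le_max_left _ _)
    · exact le_trans (hMw _) (le_max_right _ _)
  have hintv : Integrable (fun q : EuclideanSpace ℝ (Fin n) × ℝ =>
      (if q.2 < 0 then f q.1 else v q) * Jx q) :=
    hJxint.bdd_mul hcv.aestronglyMeasurable (Filter.Eventually.of_forall hbv)
  have hintw : Integrable (fun q : EuclideanSpace ℝ (Fin n) × ℝ =>
      (if q.2 < 0 then f q.1 else w q) * Jx q) :=
    hJxint.bdd_mul hcw.aestronglyMeasurable (Filter.Eventually.of_forall hbw)
  have hrw : ∀ u : EuclideanSpace ℝ (Fin n) × ℝ → ℝ,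
      (fun q : EuclideanSpace ℝ (Fin n) × ℝ =>
        J (x - q.1, t - q.2) * (if q.2 < 0 then f q.1 else u q))
      = fun q => (if q.2 < 0 then f q.1 else u q) * Jx q := by
    intro u; funext q; rw [mul_comm]; rfl
  have goal1 : (∫ q : EuclideanSpace ℝ (Fin n) × ℝ,
      J (x - q.1, t - q.2) * (if q.2 < 0 then f q.1 else v q))
      = ∫ q : EuclideanSpace ℝ (Fin n) × ℝ, (if q.2 < 0 then f q.1 else v q) * Jx q := by
    rw [hrw v]
  have goal2 : (∫ q : EuclideanSpace ℝ (Fin n) × ℝ,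
      J (x - q.1, t - q.2) * (if q.2 < 0 then f q.1 else w q))
      = ∫ q : EuclideanSpace ℝ (Fin n) × ℝ, (if q.2 < 0 then f q.1 else w q) * Jx q := by
    rw [hrw w]
  rw [goal1, goal2, ← integral_sub hintv hintw]
  have hDint : Integrable (fun q : EuclideanSpace ℝ (Fin n) × ℝ =>
      (if q.2 < 0 then f q.1 else v q) * Jx q - (if q.2 < 0 then f q.1 else w q) * Jx q) :=
    hintv.sub hintw
  calc |∫ q : EuclideanSpace ℝ (Fin n) × ℝ,
        ((if q.2 < 0 then f q.1 else v q) * Jx q - (if q.2 < 0 then f q.1 else w q) * Jx q)|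
      ≤ ∫ q : EuclideanSpace ℝ (Fin n) × ℝ,
        |(if q.2 < 0 then f q.1 else v q) * Jx q - (if q.2 < 0 then f q.1 else w q) * Jx q| := by
        simpa [Real.norm_eq_abs] using norm_integral_le_integral_norm
          (fun q : EuclideanSpace ℝ (Fin n) × ℝ =>
            (if q.2 < 0 then f q.1 else v q) * Jx q - (if q.2 < 0 then f q.1 else w q) * Jx q)
    _ ≤ ∫ q : EuclideanSpace ℝ (Fin n) × ℝ,
        ({q : EuclideanSpace ℝ (Fin n) × ℝ | 0 < q.2 ∧ q.2 ≤ α / 2}).indicator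
          (fun q => M * Jx q) q := by
        refine integral_mono_ae hDint.abs ((hJxint.const_mul M).indicator hSmeas) ?_
        filter_upwards [hae] with q hq
        rcases lt_or_gt_of_ne hq with hneg | hpos
        · rw [if_pos hneg, if_pos hneg, sub_self, abs_zero]
          exact Set.indicator_nonneg (fun p _ => mul_nonneg hM0 (hJxnn p)) q
        · rw [if_neg (not_lt.mpr hpos.le), if_neg (not_lt.mpr hpos.le), ← sub_mul, abs_mul,
            abs_of_nonneg (hJxnn q)]
          by_cases hle : q.2 ≤ α / 2
          · rw [Set.indicator_of_mem
              (show q ∈ {q : EuclideanSpace ℝ (Fin n) × ℝ | 0 < q.2 ∧ q.2 ≤ α / 2} from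
                ⟨hpos, hle⟩)]
            exact mul_le_mul_of_nonneg_right (hM q hpos.le hle) (hJxnn q)
          · have hz : Jx q = 0 := hJsupp ((x, t) - q) (show t - q.2 < 0 by linarith)
            rw [hz, mul_zero, Set.indicator_of_notMem
              (show q ∉ {q : EuclideanSpace ℝ (Fin n) × ℝ | 0 < q.2 ∧ q.2 ≤ α / 2} from
                fun hc => hle hc.2)]
    _ = (∫ q in {q : EuclideanSpace ℝ (Fin n) × ℝ | 0 < q.2 ∧ q.2 ≤ α / 2}, Jx q) * M := by
        rw [integral_indicator hSmeas, integral_const_mul, mul_comm]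
    _ ≤ τ * M := mul_le_mul_of_nonneg_right (part4 x t ht0 ht1) hM0
end

section
/- Let n ≥ 1 and let J : ℝⁿ × ℝ → ℝ be a measurable kernel satisfying: supp J ⊂ ℝⁿ × [0,∞); J ≥ 0; J ∈ L¹(ℝ^{n+1}) with ∬ J = 1; and J has compact support. Set α = sup{β : ∬_{s ≤ β} J(y,s) dy ds < 1} and τ = ∬_{0 < s ≤ α/2} J(z,s) dz ds. Fix f ∈ L¹(ℝⁿ) ∩ L^∞(ℝⁿ) and define T₁v(x,t) = ∬ J(x−y, t−s) v̄(y,s) dy ds on ℝⁿ × [0, α/2], where v̄ = f for s < 0 and v̄ = v for 0 ≤ s ≤ α/2. Let T₁^m f denote the m-th iterate of T₁ starting from the function (x,t) ↦ f(x). Then for every m ≥ 1 and every t ∈ [0, α/2]: (i) ∫_{ℝⁿ} |T₁^m f(x,t)| dx ≤ ∫_{ℝⁿ} |f(x)| dx; (ii) ∫_{ℝⁿ} T₁^m f(x,t) dx = ∫_{ℝⁿ} f(x) dx; and (iii) with |||v||| = sup_{t ∈ [0,α/2]} ‖v(·,t)‖_{L¹(ℝⁿ)}, one has |||T₁^{m+1}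 f − T₁^m f||| ≤ τ^m |||T₁ f − f|||. -/
open MeasureTheory Real

open MeasureTheory.Measure Filter

namespace CtrwSlabAux

instance prodNegInvariant {G H : Type*} [MeasurableSpace G] [MeasurableSpace H]
    [SubtractionMonoid G] [SubtractionMonoid H] [MeasurableNeg G] [MeasurableNeg H]
    (μ : Measure G) (ν : Measure H) [SFinite μ] [SFinite ν]
    [μ.IsNegInvariant] [ν.IsNegInvariant] : (μ.prod ν).IsNegInvariant := by
  constructor
  have h : (Neg.neg : G × H → G × H) = Prod.map Neg.neg Neg.neg := rfl
  rw [Measure.neg, h,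
    ((Measure.measurePreserving_neg μ).prod (Measure.measurePreserving_neg ν)).map_eq]

abbrev Es (n : ℕ) := EuclideanSpace ℝ (Fin n)

variable {n : ℕ}

/-- the time marginal of `J` -/
noncomputable def mrg (J : Es n × ℝ → ℝ) (u : ℝ) : ℝ := ∫ y : Es n, J (y, u)

theorem mrg_nonneg {J : Es n × ℝ → ℝ} (hJnn : ∀ p, 0 ≤ J p) (u : ℝ) : 0 ≤ mrg J u :=
  integral_nonneg fun y => hJnn (y, u)

theorem mrg_neg {J : Es n × ℝ → ℝ} (hJsupp : ∀ p : Es n × ℝ, p.2 < 0 → J p = 0)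
    {u : ℝ} (hu : u < 0) : mrg J u = 0 := by
  have h : (fun y : Es n => J (y, u)) = fun _ => (0 : ℝ) := funext fun y => hJsupp (y, u) hu
  simp [mrg, h]

theorem mrg_stronglyMeasurable {J : Es n × ℝ → ℝ} (hJmeas : Measurable J) :
    StronglyMeasurable (mrg J) :=
  hJmeas.stronglyMeasurable.integral_prod_left'

theorem mrg_integrable {J : Es n × ℝ → ℝ} (hJnn : ∀ p, 0 ≤ J p) (hJint : Integrable J) :
    Integrable (mrg J) := by
  rw [Measure.volume_eq_prod] at hJint
  refine hJint.integral_norm_prod_right.congr (Eventually.of_forall fun u => ?_)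
  refine integral_congr_ae (Eventually.of_forall fun y => ?_)
  exact (Real.norm_of_nonneg (hJnn (y, u)))

theorem mrg_total {J : Es n × ℝ → ℝ} (hJint : Integrable J)
    (hJone : ∫ p : Es n × ℝ, J p = 1) : ∫ u : ℝ, mrg J u = 1 := by
  have hJ' : Integrable (fun p : Es n × ℝ => J p) ((volume : Measure (Es n)).prod volume) := by
    rw [← Measure.volume_eq_prod]; exact hJint
  have swap : ∫ (y : Es n), ∫ (u : ℝ), J (y, u) = ∫ (u : ℝ), ∫ (y : Es n), J (y, u) :=
    integral_integral_swap (f := fun y u => J (y, u)) hJ'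
  calc ∫ u : ℝ, mrg J u = ∫ (u : ℝ), ∫ (y : Es n), J (y, u) := rfl
    _ = ∫ (y : Es n), ∫ (u : ℝ), J (y, u) := swap.symm
    _ = ∫ p : Es n × ℝ, J p ∂((volume : Measure (Es n)).prod volume) :=
        (integral_prod _ hJ').symm
    _ = 1 := by rw [← Measure.volume_eq_prod]; exact hJone

theorem mrg_shift_total {J : Es n × ℝ → ℝ} (hJint : Integrable J)
    (hJone : ∫ p : Es n × ℝ, J p = 1) (t : ℝ) : ∫ s : ℝ, mrg J (t - s) = 1 := by
  rw [integral_sub_left_eq_self (mrg J) volume t]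
  exact mrg_total hJint hJone

theorem tr (J : Es n × ℝ → ℝ) (u : ℝ) (a : Es n) :
    (∫ x : Es n, J (x - a, u)) = mrg J u :=
  integral_sub_right_eq_self (fun x => J (x, u)) a

theorem nrm {J : Es n × ℝ → ℝ} (hJnn : ∀ p, 0 ≤ J p) (q : Es n × ℝ) (t c : ℝ) :
    ∫ x : Es n, ‖J (x - q.1, t - q.2) * c‖ = mrg J (t - q.2) * |c| := by
  have h : ∀ x : Es n, ‖J (x - q.1, t - q.2) * c‖ = J (x - q.1, t - q.2) * |c| := fun x => by
    rw [norm_mul, Real.norm_of_nonneg (hJnn _), Real.norm_eq_abs]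
  simp_rw [h]
  rw [integral_mul_const, tr]

theorem aeslice {J : Es n × ℝ → ℝ} (hJint : Integrable J) (t : ℝ) :
    ∀ᵐ q : Es n × ℝ, Integrable (fun x : Es n => J (x - q.1, t - q.2)) := by
  have h0 : Integrable J ((volume : Measure (Es n)).prod volume) := by
    rw [← Measure.volume_eq_prod]; exact hJint
  have h1 : ∀ᵐ u : ℝ, Integrable (fun y : Es n => J (y, u)) := h0.prod_left_ae
  have h2 : ∀ᵐ s : ℝ, Integrable (fun y : Es n => J (y, t - s)) :=
    ((Measure.measurePreserving_sub_left volume t).quasiMeasurePreserving).ae h1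
  have h3 : ∀ᵐ q : Es n × ℝ, Integrable (fun y : Es n => J (y, t - q.2)) := by
    rw [Measure.volume_eq_prod]
    exact (Measure.quasiMeasurePreserving_snd).ae h2
  filter_upwards [h3] with q hq
  exact hq.comp_sub_right q.1

theorem ptInt {J : Es n × ℝ → ℝ} (hJmeas : Measurable J) (hJint : Integrable J)
    {g : Es n × ℝ → ℝ} (hg : Measurable g) {C : ℝ} (hgb : ∀ q, |g q| ≤ C)
    (p : Es n × ℝ) :
    Integrable (fun q : Es n × ℝ => J (p.1 - q.1, p.2 - q.2) * g q) := by
  have h1 : Integrable (fun q : Es n × ℝ => J (p - q)) := by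
    rw [Measure.volume_eq_prod] at hJint ⊢
    haveI := prodNegInvariant (volume : Measure (Es n)) (volume : Measure ℝ)
    exact hJint.comp_sub_left p
  have h2 : Integrable (fun q : Es n × ℝ => g q * J (p - q)) :=
    h1.bdd_mul hg.aestronglyMeasurable (c := C) (Eventually.of_forall fun q => by
      simpa [Real.norm_eq_abs] using hgb q)
  refine h2.congr (Eventually.of_forall fun q => ?_)
  show g q * J (p - q) = J (p.1 - q.1, p.2 - q.2) * g q
  rw [mul_comm]
  rfl

theorem intJshift (J : Es n × ℝ → ℝ) (hJint : Integrable J)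
    (hJone : ∫ p : Es n × ℝ, J p = 1) (p : Es n × ℝ) :
    ∫ q : Es n × ℝ, J (p.1 - q.1, p.2 - q.2) = 1 := by
  have h : ∫ q : Es n × ℝ, J (p - q) = 1 := by
    rw [Measure.volume_eq_prod] at hJone ⊢
    haveI := prodNegInvariant (volume : Measure (Es n)) (volume : Measure ℝ)
    rw [integral_sub_left_eq_self J _ p]
    exact hJone
  exact h


section Core

variable {J : Es n × ℝ → ℝ} {g : Es n × ℝ → ℝ}

theorem prod_split (k : Es n × ℝ → ℝ) (hk : Integrable k) :
    ∫ q : Es n × ℝ, k q = ∫ s : ℝ, ∫ y : Es n, k (y, s) := by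
  rw [Measure.volume_eq_prod] at hk
  calc ∫ q : Es n × ℝ, k q
      = ∫ q : Es n × ℝ, k q ∂((volume : Measure (Es n)).prod volume) := by
        rw [← Measure.volume_eq_prod]
    _ = ∫ y : Es n, ∫ s : ℝ, k (y, s) := integral_prod _ hk
    _ = ∫ s : ℝ, ∫ y : Es n, k (y, s) :=
        integral_integral_swap (f := fun y s => k (y, s)) hk

theorem slice_norm_meas (hg : Measurable g) :
    StronglyMeasurable (fun s : ℝ => ∫ y : Es n, |g (y, s)|) :=
  (hg.abs.stronglyMeasurable).integral_prod_left'

theorem hfun_meas (hJmeas : Measurable J) (hg : Measurable g) (t : ℝ) :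
    StronglyMeasurable (fun s : ℝ => mrg J (t - s) * ∫ y : Es n, |g (y, s)|) :=
  ((mrg_stronglyMeasurable hJmeas).comp_measurable
    (measurable_const.sub measurable_id)).mul (slice_norm_meas hg)

theorem mrg_shift_integrable (hJnn : ∀ p, 0 ≤ J p) (hJint : Integrable J) (t : ℝ) :
    Integrable (fun s : ℝ => mrg J (t - s)) :=
  (mrg_integrable hJnn hJint).comp_sub_left t

theorem hfun_nonneg (hJnn : ∀ p, 0 ≤ J p) (t s : ℝ) :
    0 ≤ mrg J (t - s) * ∫ y : Es n, |g (y, s)| :=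
  mul_nonneg (mrg_nonneg hJnn _) (integral_nonneg fun _ => abs_nonneg _)

theorem hfun_le (hJsupp : ∀ p : Es n × ℝ, p.2 < 0 → J p = 0) (hJnn : ∀ p, 0 ≤ J p)
    {t N : ℝ} (hN : ∀ s, s ≤ t → (∫ y : Es n, |g (y, s)|) ≤ N) :
    ∀ s : ℝ, mrg J (t - s) * (∫ y : Es n, |g (y, s)|) ≤ N * mrg J (t - s) := by
  intro s
  by_cases hs : s ≤ t
  · rw [mul_comm]
    exact mul_le_mul_of_nonneg_right (hN s hs) (mrg_nonneg hJnn _)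
  · rw [mrg_neg hJsupp (by linarith : t - s < 0)]
    simp

theorem hfun_int (hJsupp : ∀ p : Es n × ℝ, p.2 < 0 → J p = 0) (hJnn : ∀ p, 0 ≤ J p)
    (hJmeas : Measurable J) (hJint : Integrable J) (hg : Measurable g) {t N : ℝ}
    (hN : ∀ s, s ≤ t → (∫ y : Es n, |g (y, s)|) ≤ N) :
    Integrable (fun s : ℝ => mrg J (t - s) * ∫ y : Es n, |g (y, s)|) := by
  refine Integrable.mono' ((mrg_shift_integrable hJnn hJint t).const_mul N)
    (hfun_meas hJmeas hg t).aestronglyMeasurable (Eventually.of_forall fun s => ?_)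
  rw [Real.norm_of_nonneg (hfun_nonneg hJnn t s)]
  exact hfun_le hJsupp hJnn hN s

theorem A1 (hJsupp : ∀ p : Es n × ℝ, p.2 < 0 → J p = 0) (hJnn : ∀ p, 0 ≤ J p)
    (hJmeas : Measurable J) (hJint : Integrable J) (hg : Measurable g) {t N : ℝ}
    (hsl : ∀ s, s ≤ t → Integrable (fun y : Es n => g (y, s)))
    (hN : ∀ s, s ≤ t → (∫ y : Es n, |g (y, s)|) ≤ N) :
    Integrable (fun q : Es n × ℝ => mrg J (t - q.2) * |g q|) := by
  rw [Measure.volume_eq_prod]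
  have hmeas : Measurable (fun q : Es n × ℝ => mrg J (t - q.2) * |g q|) :=
    ((mrg_stronglyMeasurable hJmeas).measurable.comp
      (measurable_const.sub measurable_snd)).mul hg.abs
  refine (integrable_prod_iff' hmeas.aestronglyMeasurable).2 ⟨?_, ?_⟩
  · refine Eventually.of_forall fun s => ?_
    by_cases hs : s ≤ t
    · exact (hsl s hs).abs.const_mul (mrg J (t - s))
    · have h0 : mrg J (t - s) = 0 := mrg_neg hJsupp (by linarith)
      simp only [h0, zero_mul]
      exact integrable_zero _ _ _
  · refine (hfun_int hJsupp hJnn hJmeas hJint hg hN).congr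
      (Eventually.of_forall fun s => ?_)
    have h : ∀ y : Es n, ‖mrg J (t - s) * |g (y, s)|‖ = mrg J (t - s) * |g (y, s)| := fun y =>
      Real.norm_of_nonneg (mul_nonneg (mrg_nonneg hJnn _) (abs_nonneg _))
    simp_rw [h]
    rw [integral_const_mul]

theorem A3 (hJsupp : ∀ p : Es n × ℝ, p.2 < 0 → J p = 0) (hJnn : ∀ p, 0 ≤ J p)
    (hJmeas : Measurable J) (hJint : Integrable J) (hg : Measurable g) {t N : ℝ}
    (hsl : ∀ s, s ≤ t → Integrable (fun y : Es n => g (y, s)))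
    (hN : ∀ s, s ≤ t → (∫ y : Es n, |g (y, s)|) ≤ N) :
    ∫ q : Es n × ℝ, mrg J (t - q.2) * |g q|
      = ∫ s : ℝ, mrg J (t - s) * ∫ y : Es n, |g (y, s)| := by
  rw [prod_split _ (A1 hJsupp hJnn hJmeas hJint hg hsl hN)]
  simp_rw [integral_const_mul]

theorem A2 (hJsupp : ∀ p : Es n × ℝ, p.2 < 0 → J p = 0) (hJnn : ∀ p, 0 ≤ J p)
    (hJmeas : Measurable J) (hJint : Integrable J) (hg : Measurable g) {t N : ℝ}
    (hsl : ∀ s, s ≤ t → Integrable (fun y : Es n => g (y, s)))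
    (hN : ∀ s, s ≤ t → (∫ y : Es n, |g (y, s)|) ≤ N) :
    Integrable (fun z : Es n × (Es n × ℝ) => J (z.1 - z.2.1, t - z.2.2) * g z.2)
      ((volume : Measure (Es n)).prod (volume : Measure (Es n × ℝ))) := by
  have hmeas : Measurable (fun z : Es n × (Es n × ℝ) => J (z.1 - z.2.1, t - z.2.2) * g z.2) :=
    (hJmeas.comp ((measurable_fst.sub (measurable_fst.comp measurable_snd)).prodMk
      (measurable_const.sub (measurable_snd.comp measurable_snd)))).mul
      (hg.comp measurable_snd)
  refine (integrable_prod_iff' hmeas.aestronglyMeasurable).2 ⟨?_, ?_⟩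
  · filter_upwards [aeslice hJint t] with q hq
    exact hq.mul_const _
  · refine (A1 hJsupp hJnn hJmeas hJint hg hsl hN).congr
      (Eventually.of_forall fun q => ?_)
    exact (nrm hJnn q t (g q)).symm

theorem Tg_sm (hJmeas : Measurable J) (hg : Measurable g) (t : ℝ) :
    StronglyMeasurable (fun x : Es n => ∫ q : Es n × ℝ, J (x - q.1, t - q.2) * g q) := by
  have hmeas : Measurable (fun z : Es n × (Es n × ℝ) => J (z.1 - z.2.1, t - z.2.2) * g z.2) :=
    (hJmeas.comp ((measurable_fst.sub (measurable_fst.comp measurable_snd)).prodMk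
      (measurable_const.sub (measurable_snd.comp measurable_snd)))).mul
      (hg.comp measurable_snd)
  exact hmeas.stronglyMeasurable.integral_prod_right'

theorem A5 (hJsupp : ∀ p : Es n × ℝ, p.2 < 0 → J p = 0) (hJnn : ∀ p, 0 ≤ J p)
    (hJmeas : Measurable J) (hJint : Integrable J) (hg : Measurable g) {t N : ℝ}
    (hsl : ∀ s, s ≤ t → Integrable (fun y : Es n => g (y, s)))
    (hN : ∀ s, s ≤ t → (∫ y : Es n, |g (y, s)|) ≤ N) :
    Integrable (fun x : Es n => ∫ q : Es n × ℝ, J (x - q.1, t - q.2) * g q) ∧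
    (∫ x : Es n, |∫ q : Es n × ℝ, J (x - q.1, t - q.2) * g q|)
      ≤ ∫ s : ℝ, mrg J (t - s) * ∫ y : Es n, |g (y, s)| := by
  have hA2 := A2 hJsupp hJnn hJmeas hJint hg hsl hN
  have hnorm : Integrable
      (fun x : Es n => ∫ q : Es n × ℝ, ‖J (x - q.1, t - q.2) * g q‖) :=
    hA2.integral_norm_prod_left
  have hTgsm := Tg_sm hJmeas hg t
  have hptle : ∀ x : Es n, |∫ q : Es n × ℝ, J (x - q.1, t - q.2) * g q|
      ≤ ∫ q : Es n × ℝ, ‖J (x - q.1, t - q.2) * g q‖ := fun x => by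
    simpa using norm_integral_le_integral_norm (fun q : Es n × ℝ => J (x - q.1, t - q.2) * g q)
  have hTgint : Integrable (fun x : Es n => ∫ q : Es n × ℝ, J (x - q.1, t - q.2) * g q) := by
    refine hnorm.mono' hTgsm.aestronglyMeasurable (Eventually.of_forall fun x => ?_)
    simpa using hptle x
  refine ⟨hTgint, ?_⟩
  calc ∫ x : Es n, |∫ q : Es n × ℝ, J (x - q.1, t - q.2) * g q|
      ≤ ∫ x : Es n, ∫ q : Es n × ℝ, ‖J (x - q.1, t - q.2) * g q‖ :=
        integral_mono hTgint.abs hnorm hptle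
    _ = ∫ q : Es n × ℝ, ∫ x : Es n, ‖J (x - q.1, t - q.2) * g q‖ :=
        integral_integral_swap (f := fun x q => ‖J (x - q.1, t - q.2) * g q‖) hA2.norm
    _ = ∫ q : Es n × ℝ, mrg J (t - q.2) * |g q| :=
        integral_congr_ae (Eventually.of_forall fun q => nrm hJnn q t (g q))
    _ = ∫ s : ℝ, mrg J (t - s) * ∫ y : Es n, |g (y, s)| :=
        A3 hJsupp hJnn hJmeas hJint hg hsl hN

theorem A6 (hJsupp : ∀ p : Es n × ℝ, p.2 < 0 → J p = 0) (hJnn : ∀ p, 0 ≤ J p)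
    (hJmeas : Measurable J) (hJint : Integrable J) (hg : Measurable g) {t N : ℝ}
    (hsl : ∀ s, s ≤ t → Integrable (fun y : Es n => g (y, s)))
    (hN : ∀ s, s ≤ t → (∫ y : Es n, |g (y, s)|) ≤ N) :
    ∫ x : Es n, (∫ q : Es n × ℝ, J (x - q.1, t - q.2) * g q)
      = ∫ s : ℝ, mrg J (t - s) * ∫ y : Es n, g (y, s) := by
  have hA2 := A2 hJsupp hJnn hJmeas hJint hg hsl hN
  rw [integral_integral_swap (f := fun x q => J (x - q.1, t - q.2) * g q) hA2]
  have hq : ∀ q : Es n × ℝ, (∫ x : Es n, J (x - q.1, t - q.2) * g q)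
      = mrg J (t - q.2) * g q := fun q => by
    rw [integral_mul_const, tr]
  simp_rw [hq]
  have hint2 : Integrable (fun q : Es n × ℝ => mrg J (t - q.2) * g q) := by
    refine (A1 hJsupp hJnn hJmeas hJint hg hsl hN).mono'
      (((mrg_stronglyMeasurable hJmeas).measurable.comp
        (measurable_const.sub measurable_snd)).mul hg).aestronglyMeasurable
      (Eventually.of_forall fun q => ?_)
    rw [Real.norm_eq_abs, abs_mul, abs_of_nonneg (mrg_nonneg hJnn _)]
  rw [prod_split _ hint2]
  simp_rw [integral_const_mul]

end Core


section Conc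

variable {J : Es n × ℝ → ℝ} {g : Es n × ℝ → ℝ}

/-- L¹ bound for the slab operator applied to `g`. -/
theorem C1 (hJsupp : ∀ p : Es n × ℝ, p.2 < 0 → J p = 0) (hJnn : ∀ p, 0 ≤ J p)
    (hJmeas : Measurable J) (hJint : Integrable J)
    (hJone : ∫ p : Es n × ℝ, J p = 1) (hg : Measurable g) {t N : ℝ}
    (hsl : ∀ s, s ≤ t → Integrable (fun y : Es n => g (y, s)))
    (hN : ∀ s, s ≤ t → (∫ y : Es n, |g (y, s)|) ≤ N) :
    (∫ x : Es n, |∫ q : Es n × ℝ, J (x - q.1, t - q.2) * g q|) ≤ N := by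
  refine le_trans (A5 hJsupp hJnn hJmeas hJint hg hsl hN).2 ?_
  calc ∫ s : ℝ, mrg J (t - s) * ∫ y : Es n, |g (y, s)|
      ≤ ∫ s : ℝ, N * mrg J (t - s) :=
        integral_mono (hfun_int hJsupp hJnn hJmeas hJint hg hN)
          ((mrg_shift_integrable hJnn hJint t).const_mul N) (hfun_le hJsupp hJnn hN)
    _ = N * ∫ s : ℝ, mrg J (t - s) := integral_const_mul N _
    _ = N := by rw [mrg_shift_total hJint hJone, mul_one]

/-- Mass conservation for the slab operator applied to `g`. -/
theorem C2 (hJsupp : ∀ p : Es n × ℝ, p.2 < 0 → J p = 0) (hJnn : ∀ p, 0 ≤ J p)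
    (hJmeas : Measurable J) (hJint : Integrable J)
    (hJone : ∫ p : Es n × ℝ, J p = 1) (hg : Measurable g) {t N I : ℝ}
    (hsl : ∀ s, s ≤ t → Integrable (fun y : Es n => g (y, s)))
    (hN : ∀ s, s ≤ t → (∫ y : Es n, |g (y, s)|) ≤ N)
    (hmass : ∀ s, s ≤ t → (∫ y : Es n, g (y, s)) = I) :
    (∫ x : Es n, ∫ q : Es n × ℝ, J (x - q.1, t - q.2) * g q) = I := by
  rw [A6 hJsupp hJnn hJmeas hJint hg hsl hN]
  have hpt : ∀ s : ℝ, mrg J (t - s) * (∫ y : Es n, g (y, s)) = mrg J (t - s) * I := by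
    intro s
    by_cases hs : s ≤ t
    · rw [hmass s hs]
    · rw [mrg_neg hJsupp (by linarith : t - s < 0), zero_mul, zero_mul]
  simp_rw [hpt]
  rw [integral_mul_const, mrg_shift_total hJint hJone, one_mul]

/-- Contraction estimate for the slab operator applied to `g` vanishing at negative times. -/
theorem C3 (hJsupp : ∀ p : Es n × ℝ, p.2 < 0 → J p = 0) (hJnn : ∀ p, 0 ≤ J p)
    (hJmeas : Measurable J) (hJint : Integrable J) (hg : Measurable g) {t c B : ℝ}
    (ht : 0 ≤ t) (htc : t ≤ c) (hB0 : 0 ≤ B)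
    (hsl : ∀ s, s ≤ t → Integrable (fun y : Es n => g (y, s)))
    (hzero : ∀ s : ℝ, s < 0 → ∀ y : Es n, g (y, s) = 0)
    (hB : ∀ s, 0 ≤ s → s ≤ t → (∫ y : Es n, |g (y, s)|) ≤ B) :
    (∫ x : Es n, |∫ q : Es n × ℝ, J (x - q.1, t - q.2) * g q|)
      ≤ (∫ u in Set.Ioc 0 c, mrg J u) * B := by
  have hN : ∀ s, s ≤ t → (∫ y : Es n, |g (y, s)|) ≤ B := by
    intro s hs
    rcases lt_or_ge s 0 with hs0 | hs0
    · have hz : ∀ y : Es n, |g (y, s)| = 0 := fun y => by rw [hzero s hs0 y, abs_zero]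
      simp_rw [hz]
      simpa using hB0
    · exact hB s hs0 hs
  refine le_trans (A5 hJsupp hJnn hJmeas hJint hg hsl hN).2 ?_
  set w : ℝ → ℝ := fun s => B * (Set.Icc 0 t).indicator (fun s' => mrg J (t - s')) s with hw
  have hwint : Integrable w :=
    ((mrg_shift_integrable hJnn hJint t).indicator measurableSet_Icc).const_mul B
  have hle : ∀ s : ℝ, mrg J (t - s) * (∫ y : Es n, |g (y, s)|) ≤ w s := by
    intro s
    rcases lt_or_ge s 0 with hs0 | hs0
    · have hz : ∀ y : Es n, |g (y, s)| = 0 := fun y => by rw [hzero s hs0 y, abs_zero]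
      have : (∫ y : Es n, |g (y, s)|) = 0 := by simp_rw [hz]; simp
      rw [this, mul_zero, hw]
      simp only []
      refine mul_nonneg hB0 (Set.indicator_nonneg (fun s' _ => mrg_nonneg hJnn _) s)
    · rcases le_or_gt s t with hst | hst
      · have hmem : s ∈ Set.Icc 0 t := ⟨hs0, hst⟩
        rw [hw]
        simp only [Set.indicator_of_mem hmem]
        rw [mul_comm B _]
        exact mul_le_mul_of_nonneg_left (hB s hs0 hst) (mrg_nonneg hJnn _)
      · rw [mrg_neg hJsupp (by linarith : t - s < 0), zero_mul, hw]
        simp only []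
        refine mul_nonneg hB0 (Set.indicator_nonneg (fun s' _ => mrg_nonneg hJnn _) s)
  have hswap : ∀ s : ℝ, (Set.Icc 0 t).indicator (fun s' => mrg J (t - s')) s
      = (Set.Icc 0 t).indicator (mrg J) (t - s) := by
    intro s
    by_cases hs : s ∈ Set.Icc 0 t
    · rw [Set.indicator_of_mem hs, Set.indicator_of_mem
        (Set.mem_Icc.2 ⟨by linarith [(Set.mem_Icc.1 hs).2], by linarith [(Set.mem_Icc.1 hs).1]⟩)]
    · rw [Set.indicator_of_notMem hs, Set.indicator_of_notMem (fun hmem => hs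
        (Set.mem_Icc.2 ⟨by linarith [(Set.mem_Icc.1 hmem).2], by linarith [(Set.mem_Icc.1 hmem).1]⟩))]
  calc ∫ s : ℝ, mrg J (t - s) * ∫ y : Es n, |g (y, s)|
      ≤ ∫ s : ℝ, w s :=
        integral_mono (hfun_int hJsupp hJnn hJmeas hJint hg hN) hwint hle
    _ = B * ∫ s : ℝ, (Set.Icc 0 t).indicator (fun s' => mrg J (t - s')) s := by
        rw [hw, integral_const_mul]
    _ = B * ∫ s : ℝ, (Set.Icc 0 t).indicator (mrg J) (t - s) := by
        congr 1
        exact integral_congr_ae (Eventually.of_forall hswap)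
    _ = B * ∫ u : ℝ, (Set.Icc 0 t).indicator (mrg J) u := by
        rw [integral_sub_left_eq_self ((Set.Icc 0 t).indicator (mrg J)) volume t]
    _ = B * ∫ u in Set.Icc 0 t, mrg J u := by rw [integral_indicator measurableSet_Icc]
    _ = B * ∫ u in Set.Ioc 0 t, mrg J u := by rw [MeasureTheory.integral_Icc_eq_integral_Ioc]
    _ ≤ B * ∫ u in Set.Ioc 0 c, mrg J u := by
        refine mul_le_mul_of_nonneg_left ?_ hB0
        refine setIntegral_mono_set ((mrg_integrable hJnn hJint).integrableOn) ?_ ?_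
        · exact Eventually.of_forall fun u => mrg_nonneg hJnn u
        · exact HasSubset.Subset.eventuallyLE (Set.Ioc_subset_Ioc_right htc)
    _ = (∫ u in Set.Ioc 0 c, mrg J u) * B := mul_comm _ _

/-- identification of `τ` with the `Ioc`-integral of the marginal. -/
theorem tau_eq (hJmeas : Measurable J) (hJint : Integrable J) (c : ℝ) :
    (∫ q in {q : Es n × ℝ | 0 < q.2 ∧ q.2 ≤ c}, J q) = ∫ u in Set.Ioc 0 c, mrg J u := by
  have hSeq : {q : Es n × ℝ | 0 < q.2 ∧ q.2 ≤ c} = Prod.snd ⁻¹' (Set.Ioc 0 c) := rfl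
  have hS : MeasurableSet {q : Es n × ℝ | 0 < q.2 ∧ q.2 ≤ c} := by
    rw [hSeq]; exact measurable_snd measurableSet_Ioc
  rw [← integral_indicator hS]
  have hind : Integrable ({q : Es n × ℝ | 0 < q.2 ∧ q.2 ≤ c}.indicator J) := hJint.indicator hS
  rw [prod_split _ hind, ← integral_indicator measurableSet_Ioc]
  refine integral_congr_ae (Eventually.of_forall fun s => ?_)
  by_cases hs : s ∈ Set.Ioc 0 c
  · rw [Set.indicator_of_mem hs]
    refine integral_congr_ae (Eventually.of_forall fun y => ?_)
    exact Set.indicator_of_mem (by exact hs) J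
  · have hz : ∀ y : Es n, ({q : Es n × ℝ | 0 < q.2 ∧ q.2 ≤ c}).indicator J (y, s) = 0 :=
      fun y => Set.indicator_of_notMem (by exact hs) J
    rw [Set.indicator_of_notMem hs]
    simp_rw [hz]
    simp

theorem tau_nonneg (hJnn : ∀ p, 0 ≤ J p) (c : ℝ) :
    0 ≤ ∫ u in Set.Ioc 0 c, mrg J u :=
  setIntegral_nonneg measurableSet_Ioc fun u _ => mrg_nonneg hJnn u

theorem alpha_nonneg (hJsupp : ∀ p : Es n × ℝ, p.2 < 0 → J p = 0)
    (hJint : Integrable J) (hJone : ∫ p : Es n × ℝ, J p = 1) (hJcpt : HasCompactSupport J) :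
    0 ≤ sSup {β : ℝ | ∫ q in {q : Es n × ℝ | q.2 ≤ β}, J q < 1} := by
  obtain ⟨R, hR⟩ : ∃ R : ℝ, ∀ q : Es n × ℝ, R ≤ q.2 → J q = 0 := by
    obtain ⟨R, hR⟩ := (IsCompact.isBounded hJcpt).subset_closedBall 0
    refine ⟨R + 1, fun q hq => ?_⟩
    apply image_eq_zero_of_notMem_tsupport
    intro hmem
    have h1 := hR hmem
    rw [Metric.mem_closedBall, dist_zero_right] at h1
    have h2 : ‖q.2‖ ≤ ‖q‖ := norm_snd_le q
    rw [Real.norm_eq_abs] at h2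
    have := le_abs_self q.2
    linarith
  refine le_csSup ⟨R, fun β hβ => ?_⟩ ?_
  · simp only [Set.mem_setOf_eq] at hβ
    by_contra hcon
    push_neg at hcon
    have hfull : (∫ q in {q : Es n × ℝ | q.2 ≤ β}, J q) = 1 := by
      rw [setIntegral_eq_integral_of_forall_compl_eq_zero (fun q hq => ?_)]
      · exact hJone
      · refine hR q ?_
        simp only [Set.mem_setOf_eq, not_le] at hq
        linarith
    rw [hfull] at hβ
    exact lt_irrefl _ hβ
  · show (∫ q in {q : Es n × ℝ | q.2 ≤ (0:ℝ)}, J q) < 1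
    have hSm : MeasurableSet {q : Es n × ℝ | q.2 ≤ (0:ℝ)} :=
      measurable_snd measurableSet_Iic
    have hnull : (volume : Measure (Es n × ℝ)) {q : Es n × ℝ | q.2 = 0} = 0 := by
      rw [Measure.volume_eq_prod]
      have h1 : {q : Es n × ℝ | q.2 = 0} = (Set.univ : Set (Es n)) ×ˢ ({0} : Set ℝ) := by
        ext ⟨y, s⟩
        simp [Set.mem_prod, eq_comm]
      rw [h1, Measure.prod_prod]
      simp
    have hae : ∀ᵐ q : Es n × ℝ, q.2 ≠ 0 := by
      have h2 : {q : Es n × ℝ | ¬ q.2 ≠ 0} = {q : Es n × ℝ | q.2 = 0} := by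
        ext q; simp
      rw [ae_iff, h2]
      exact hnull
    have hzero : (∫ q in {q : Es n × ℝ | q.2 ≤ (0:ℝ)}, J q) = 0 := by
      rw [← integral_indicator hSm]
      have : ∀ᵐ q : Es n × ℝ, ({q : Es n × ℝ | q.2 ≤ (0:ℝ)}).indicator J q = 0 := by
        filter_upwards [hae] with q hq
        by_cases hqS : q ∈ {q : Es n × ℝ | q.2 ≤ (0:ℝ)}
        · rw [Set.indicator_of_mem hqS]
          exact hJsupp q (lt_of_le_of_ne hqS hq)
        · exact Set.indicator_of_notMem hqS J
      rw [integral_congr_ae this]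
      simp
    rw [hzero]
    exact one_pos

end Conc


section NiceSec

variable {J : Es n × ℝ → ℝ} {f : Es n → ℝ}

/-- invariant preserved by the first-slab operator -/
structure Nice (J : Es n × ℝ → ℝ) (f : Es n → ℝ) (c : ℝ) (v : Es n × ℝ → ℝ) : Prop where
  meas : Measurable v
  bdd : ∃ C : ℝ, ∀ p, |v p| ≤ C
  sInt : ∀ s, 0 ≤ s → s ≤ c → Integrable (fun y : Es n => v (y, s))
  sNorm : ∀ s, 0 ≤ s → s ≤ c → (∫ y : Es n, |v (y, s)|) ≤ ∫ y : Es n, |f y|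
  sMass : ∀ s, 0 ≤ s → s ≤ c → (∫ y : Es n, v (y, s)) = ∫ y : Es n, f y

/-- the extension `v̄` of `v` by the initial data -/
noncomputable def ext (f : Es n → ℝ) (v : Es n × ℝ → ℝ) : Es n × ℝ → ℝ :=
  fun q => if q.2 < 0 then f q.1 else v q

theorem ext_meas {v : Es n × ℝ → ℝ} (hfmeas : Measurable f) (hv : Measurable v) :
    Measurable (ext f v) :=
  Measurable.ite (measurableSet_lt measurable_snd measurable_const)
    (hfmeas.comp measurable_fst) hv

theorem ext_slice (f : Es n → ℝ) (v : Es n × ℝ → ℝ) (s : ℝ) :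
    (fun y : Es n => ext f v (y, s)) = if s < 0 then f else fun y => v (y, s) := by
  by_cases hs : s < 0
  · simp only [ext, if_pos hs]
  · simp only [ext, if_neg hs]

theorem ext_slice_int {v : Es n × ℝ → ℝ} {c : ℝ} (hfint : Integrable f)
    (hv : Nice J f c v) {t : ℝ} (htc : t ≤ c) :
    ∀ s, s ≤ t → Integrable (fun y : Es n => ext f v (y, s)) := by
  intro s hst
  rw [ext_slice]
  by_cases hs : s < 0
  · rw [if_pos hs]; exact hfint
  · rw [if_neg hs]; exact hv.sInt s (le_of_not_gt hs) (le_trans hst htc)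

theorem ext_slice_norm {v : Es n × ℝ → ℝ} {c : ℝ}
    (hv : Nice J f c v) {t : ℝ} (htc : t ≤ c) :
    ∀ s, s ≤ t → (∫ y : Es n, |ext f v (y, s)|) ≤ ∫ y : Es n, |f y| := by
  intro s hst
  have h := ext_slice f v s
  by_cases hs : s < 0
  · rw [if_pos hs] at h
    simp only [show ∀ y : Es n, ext f v (y, s) = f y from fun y => congrFun h y]
    exact le_refl _
  · rw [if_neg hs] at h
    simp only [show ∀ y : Es n, ext f v (y, s) = v (y, s) from fun y => congrFun h y]
    exact hv.sNorm s (le_of_not_gt hs) (le_trans hst htc)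

theorem ext_slice_mass {v : Es n × ℝ → ℝ} {c : ℝ}
    (hv : Nice J f c v) {t : ℝ} (htc : t ≤ c) :
    ∀ s, s ≤ t → (∫ y : Es n, ext f v (y, s)) = ∫ y : Es n, f y := by
  intro s hst
  have h := ext_slice f v s
  by_cases hs : s < 0
  · rw [if_pos hs] at h
    simp only [show ∀ y : Es n, ext f v (y, s) = f y from fun y => congrFun h y]
  · rw [if_neg hs] at h
    simp only [show ∀ y : Es n, ext f v (y, s) = v (y, s) from fun y => congrFun h y]
    exact hv.sMass s (le_of_not_gt hs) (le_trans hst htc)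

theorem ext_bdd {v : Es n × ℝ → ℝ} {C M : ℝ} (hfbdd : ∀ x, |f x| ≤ M)
    (hv : ∀ p, |v p| ≤ C) : ∀ q, |ext f v q| ≤ max M C := by
  intro q
  rw [ext]
  by_cases hq : q.2 < 0
  · rw [if_pos hq]; exact le_trans (hfbdd q.1) (le_max_left _ _)
  · rw [if_neg hq]; exact le_trans (hv q) (le_max_right _ _)

/-- the first-slab operator is `T J f`. -/
noncomputable def Top (J : Es n × ℝ → ℝ) (f : Es n → ℝ) (v : Es n × ℝ → ℝ) :
    Es n × ℝ → ℝ :=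
  fun p => ∫ q : Es n × ℝ, J (p.1 - q.1, p.2 - q.2) * ext f v q

theorem Top_meas {v : Es n × ℝ → ℝ} (hJmeas : Measurable J) (hfmeas : Measurable f)
    (hv : Measurable v) : Measurable (Top J f v) := by
  have hmeas : Measurable (fun z : (Es n × ℝ) × (Es n × ℝ) =>
      J (z.1.1 - z.2.1, z.1.2 - z.2.2) * ext f v z.2) :=
    (hJmeas.comp (((measurable_fst.comp measurable_fst).sub
      (measurable_fst.comp measurable_snd)).prodMk
      ((measurable_snd.comp measurable_fst).sub (measurable_snd.comp measurable_snd)))).mul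
      ((ext_meas hfmeas hv).comp measurable_snd)
  exact (hmeas.stronglyMeasurable.integral_prod_right').measurable

theorem Top_bdd {v : Es n × ℝ → ℝ} (hJmeas : Measurable J) (hJint : Integrable J)
    (hJone : ∫ p : Es n × ℝ, J p = 1) (hJnn : ∀ p, 0 ≤ J p)
    (hfmeas : Measurable f) (hv : Measurable v)
    {C M : ℝ} (hfbdd : ∀ x, |f x| ≤ M) (hvb : ∀ p, |v p| ≤ C) :
    ∀ p, |Top J f v p| ≤ max M C := by
  intro p
  have hb := ext_bdd (f := f) hfbdd hvb
  have h1 : Integrable (fun q : Es n × ℝ => J (p.1 - q.1, p.2 - q.2) * ext f v q) :=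
    ptInt hJmeas hJint (ext_meas hfmeas hv) hb p
  have h2 : Integrable (fun q : Es n × ℝ => J (p.1 - q.1, p.2 - q.2)) := by
    have := ptInt hJmeas hJint (measurable_const : Measurable fun _ : Es n × ℝ => (1:ℝ))
      (C := 1) (fun q => by norm_num) p
    simpa using this
  have hM0 : 0 ≤ max M C := le_trans (abs_nonneg _) (hb ((0 : Es n), (-1 : ℝ)))
  calc |Top J f v p| ≤ ∫ q : Es n × ℝ, ‖J (p.1 - q.1, p.2 - q.2) * ext f v q‖ := by
        simpa [Top] using norm_integral_le_integral_norm
          (fun q : Es n × ℝ => J (p.1 - q.1, p.2 - q.2) * ext f v q)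
    _ ≤ ∫ q : Es n × ℝ, J (p.1 - q.1, p.2 - q.2) * max M C := by
        refine integral_mono h1.norm (h2.mul_const _) (fun q => ?_)
        rw [norm_mul, Real.norm_of_nonneg (hJnn _), Real.norm_eq_abs]
        exact mul_le_mul_of_nonneg_left (hb q) (hJnn _)
    _ = (∫ q : Es n × ℝ, J (p.1 - q.1, p.2 - q.2)) * max M C := integral_mul_const _ _
    _ = max M C := by rw [intJshift J hJint hJone p, one_mul]

theorem nice_step (hJsupp : ∀ p : Es n × ℝ, p.2 < 0 → J p = 0) (hJnn : ∀ p, 0 ≤ J p)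
    (hJmeas : Measurable J) (hJint : Integrable J) (hJone : ∫ p : Es n × ℝ, J p = 1)
    (hfmeas : Measurable f) (hfint : Integrable f) {M : ℝ} (hfbdd : ∀ x, |f x| ≤ M)
    {v : Es n × ℝ → ℝ} {c : ℝ}
    (hv : Nice J f c v) : Nice J f c (Top J f v) := by
  obtain ⟨C, hvb⟩ := hv.bdd
  refine ⟨Top_meas hJmeas hfmeas hv.meas, ⟨max M C, Top_bdd hJmeas hJint hJone hJnn
    hfmeas hv.meas hfbdd hvb⟩, ?_, ?_, ?_⟩
  · intro t ht htc
    have := A5 hJsupp hJnn hJmeas hJint (ext_meas hfmeas hv.meas)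
      (ext_slice_int hfint hv htc) (ext_slice_norm hv htc)
    exact this.1
  · intro t ht htc
    exact C1 hJsupp hJnn hJmeas hJint hJone (ext_meas hfmeas hv.meas)
      (ext_slice_int hfint hv htc) (ext_slice_norm hv htc)
  · intro t ht htc
    exact C2 hJsupp hJnn hJmeas hJint hJone (ext_meas hfmeas hv.meas)
      (ext_slice_int hfint hv htc) (ext_slice_norm hv htc) (ext_slice_mass hv htc)

theorem nice_zero (hfmeas : Measurable f) (hfint : Integrable f) {M : ℝ} (hfbdd : ∀ x, |f x| ≤ M)
    (c : ℝ) : Nice J f c (fun p : Es n × ℝ => f p.1) :=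
  ⟨hfmeas.comp measurable_fst, ⟨M, fun p => hfbdd p.1⟩,
    fun _ _ _ => hfint, fun _ _ _ => le_refl _, fun _ _ _ => rfl⟩

theorem diff_step (hJsupp : ∀ p : Es n × ℝ, p.2 < 0 → J p = 0) (hJnn : ∀ p, 0 ≤ J p)
    (hJmeas : Measurable J) (hJint : Integrable J)
    (hfmeas : Measurable f) {M : ℝ} (hfbdd : ∀ x, |f x| ≤ M) {v w : Es n × ℝ → ℝ} {c B : ℝ}
    (hv : Nice J f c v) (hw : Nice J f c w) (hB0 : 0 ≤ B)
    (hB : ∀ s, 0 ≤ s → s ≤ c → (∫ y : Es n, |w (y, s) - v (y, s)|) ≤ B)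
    {t : ℝ} (ht : 0 ≤ t) (htc : t ≤ c) :
    (∫ x : Es n, |Top J f w (x, t) - Top J f v (x, t)|)
      ≤ (∫ u in Set.Ioc 0 c, mrg J u) * B := by
  obtain ⟨Cv, hvb⟩ := hv.bdd
  obtain ⟨Cw, hwb⟩ := hw.bdd
  set g : Es n × ℝ → ℝ := fun q => if q.2 < 0 then 0 else w q - v q with hg
  have hgmeas : Measurable g :=
    Measurable.ite (measurableSet_lt measurable_snd measurable_const) measurable_const
      (hw.meas.sub hv.meas)
  have hgbd : ∀ q, |g q| ≤ Cw + Cv := by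
    intro q
    rw [hg]
    by_cases hq : q.2 < 0
    · simp only [if_pos hq, abs_zero]
      have := abs_nonneg (w q); have := hwb q; have h2 := abs_nonneg (v q); have := hvb q
      linarith
    · simp only [if_neg hq]
      exact le_trans (abs_sub _ _) (add_le_add (hwb q) (hvb q))
  have hdiff : ∀ p : Es n × ℝ, Top J f w p - Top J f v p
      = ∫ q : Es n × ℝ, J (p.1 - q.1, p.2 - q.2) * g q := by
    intro p
    have h1 : Integrable (fun q : Es n × ℝ => J (p.1 - q.1, p.2 - q.2) * ext f w q) :=
      ptInt hJmeas hJint (ext_meas hfmeas hw.meas) (ext_bdd hfbdd hwb) p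
    have h2 : Integrable (fun q : Es n × ℝ => J (p.1 - q.1, p.2 - q.2) * ext f v q) :=
      ptInt hJmeas hJint (ext_meas hfmeas hv.meas) (ext_bdd hfbdd hvb) p
    rw [Top, Top, ← integral_sub h1 h2]
    refine integral_congr_ae (Eventually.of_forall fun q => ?_)
    show J (p.1 - q.1, p.2 - q.2) * ext f w q - J (p.1 - q.1, p.2 - q.2) * ext f v q
      = J (p.1 - q.1, p.2 - q.2) * g q
    rw [← mul_sub]
    congr 1
    rw [ext, ext, hg]
    by_cases hq : q.2 < 0
    · simp only [if_pos hq]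
      exact sub_self _
    · simp only [if_neg hq]
  have hgslice : ∀ s : ℝ, s ≤ t → Integrable (fun y : Es n => g (y, s)) := by
    intro s hst
    rw [hg]
    by_cases hs : s < 0
    · simp only [if_pos hs]
      exact integrable_zero _ _ _
    · simp only [if_neg hs]
      exact (hw.sInt s (le_of_not_gt hs) (le_trans hst htc)).sub
        (hv.sInt s (le_of_not_gt hs) (le_trans hst htc))
  have hgzero : ∀ s : ℝ, s < 0 → ∀ y : Es n, g (y, s) = 0 := by
    intro s hs y
    rw [hg]
    simp only [if_pos hs]
  have hgB : ∀ s, 0 ≤ s → s ≤ t → (∫ y : Es n, |g (y, s)|) ≤ B := by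
    intro s hs0 hst
    have : ∀ y : Es n, g (y, s) = w (y, s) - v (y, s) := fun y => by
      rw [hg]; simp only [if_neg (not_lt.2 hs0)]
    simp_rw [this]
    exact hB s hs0 (le_trans hst htc)
  calc (∫ x : Es n, |Top J f w (x, t) - Top J f v (x, t)|)
      = ∫ x : Es n, |∫ q : Es n × ℝ, J (x - q.1, t - q.2) * g q| := by
        refine integral_congr_ae (Eventually.of_forall fun x => ?_)
        show |Top J f w (x, t) - Top J f v (x, t)|
          = |∫ q : Es n × ℝ, J (x - q.1, t - q.2) * g q|
        rw [hdiff (x, t)]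
    _ ≤ (∫ u in Set.Ioc 0 c, mrg J u) * B :=
        C3 hJsupp hJnn hJmeas hJint hgmeas ht htc hB0 hgslice hgzero hgB

end NiceSec

end CtrwSlabAux


open CtrwSlabAux


/-- **`L¹` bounds, mass conservation and `L¹` contraction for the iterates of the
first-slab operator `T₁`.** Let `J` be a nonnegative, integrable, compactly
supported space-time probability density supported in `{t ≥ 0}`, with
`α = sup{β : ∬_{s ≤ β} J < 1}` and `τ = ∬_{0 < s ≤ α/2} J`, and let
`f ∈ L¹ ∩ L^∞(ℝⁿ)`. Let `T₁^m f` be the `m`-th iterate of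
`T₁v(x,t) = ∬ J(x−y,t−s) v̄(y,s) dy ds` (with `v̄ = f` for `s < 0`, `v̄ = v` for
`s ≥ 0`) starting from `(x,t) ↦ f(x)`. Then for all `m ≥ 1` and `t ∈ [0, α/2]`:
(i) `∫ |T₁^m f(x,t)| dx ≤ ∫ |f| dx`; (ii) `∫ T₁^m f(x,t) dx = ∫ f dx`;
(iii) `|||T₁^{m+1} f − T₁^m f||| ≤ τ^m |||T₁ f − f|||`, where `|||·|||` is the
supremum over `t ∈ [0, α/2]` of the `L¹(ℝⁿ)` norms. -/
theorem ctrw_first_slab_iterates_L1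
    (n : ℕ) (hn : 1 ≤ n)
    (J : EuclideanSpace ℝ (Fin n) × ℝ → ℝ)
    (hJsupp : ∀ p : EuclideanSpace ℝ (Fin n) × ℝ, p.2 < 0 → J p = 0)
    (hJnonneg : ∀ p, 0 ≤ J p)
    (hJmeas : Measurable J)
    (hJint : Integrable J)
    (hJone : ∫ p : EuclideanSpace ℝ (Fin n) × ℝ, J p = 1)
    (hJcpt : HasCompactSupport J)
    (f : EuclideanSpace ℝ (Fin n) → ℝ)
    (hfmeas : Measurable f)
    (hfint : Integrable f)
    (hfbdd : ∃ M : ℝ, ∀ x, |f x| ≤ M) :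
    let α := sSup {β : ℝ | ∫ q in {q : EuclideanSpace ℝ (Fin n) × ℝ | q.2 ≤ β}, J q < 1};
    let τ := ∫ q in {q : EuclideanSpace ℝ (Fin n) × ℝ | 0 < q.2 ∧ q.2 ≤ α / 2}, J q;
    let T : (EuclideanSpace ℝ (Fin n) × ℝ → ℝ) → (EuclideanSpace ℝ (Fin n) × ℝ → ℝ) :=
      fun v p => ∫ q : EuclideanSpace ℝ (Fin n) × ℝ,
        J (p.1 - q.1, p.2 - q.2) * (if q.2 < 0 then f q.1 else v q);
    let v₀ : EuclideanSpace ℝ (Fin n) × ℝ → ℝ := fun p => f p.1;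
    ∀ m : ℕ, 1 ≤ m → ∀ t : ℝ, 0 ≤ t → t ≤ α / 2 →
      (Integrable (fun x : EuclideanSpace ℝ (Fin n) => (T^[m] v₀) (x, t)) ∧
        (∫ x : EuclideanSpace ℝ (Fin n), |(T^[m] v₀) (x, t)|)
          ≤ ∫ x : EuclideanSpace ℝ (Fin n), |f x|) ∧
      (∫ x : EuclideanSpace ℝ (Fin n), (T^[m] v₀) (x, t)
          = ∫ x : EuclideanSpace ℝ (Fin n), f x) ∧
      (∀ B : ℝ,
        (∀ s : ℝ, 0 ≤ s → s ≤ α / 2 →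
          (∫ x : EuclideanSpace ℝ (Fin n), |(T v₀) (x, s) - f x|) ≤ B) →
        (∫ x : EuclideanSpace ℝ (Fin n), |(T^[m + 1] v₀) (x, t) - (T^[m] v₀) (x, t)|)
          ≤ τ ^ m * B) := by
  intro α τ T v₀
  obtain ⟨M, hfbdd⟩ := hfbdd
  have hTop : T = Top J f := by
    funext v p
    rfl
  have hα : (0:ℝ) ≤ α := alpha_nonneg hJsupp hJint hJone hJcpt
  have hc : (0:ℝ) ≤ α / 2 := by linarith
  have hτ : τ = ∫ u in Set.Ioc 0 (α/2), mrg J u := tau_eq hJmeas hJint (α/2)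
  have hτnn : 0 ≤ ∫ u in Set.Ioc 0 (α/2), mrg J u := tau_nonneg hJnonneg (α/2)
  have hnice : ∀ m : ℕ, Nice J f (α/2) (T^[m] v₀) := by
    intro m
    induction m with
    | zero => exact nice_zero hfmeas hfint hfbdd (α/2)
    | succ k ih =>
      have e : T^[k+1] v₀ = Top J f (T^[k] v₀) :=
        (Function.iterate_succ_apply' T k v₀).trans (congrFun hTop _)
      rw [e]
      exact nice_step hJsupp hJnonneg hJmeas hJint hJone hfmeas hfint hfbdd ih
  intro m hm t ht0 htc
  have hNm := hnice m
  refine ⟨⟨hNm.sInt t ht0 htc, hNm.sNorm t ht0 htc⟩, hNm.sMass t ht0 htc, ?_⟩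
  intro B hB
  have hB0 : 0 ≤ B :=
    le_trans (integral_nonneg fun x => abs_nonneg _) (hB 0 le_rfl hc)
  have key : ∀ k : ℕ, ∀ t' : ℝ, 0 ≤ t' → t' ≤ α/2 →
      (∫ x : EuclideanSpace ℝ (Fin n), |(T^[k+1] v₀) (x, t') - (T^[k] v₀) (x, t')|)
        ≤ (∫ u in Set.Ioc 0 (α/2), mrg J u) ^ k * B := by
    intro k
    induction k with
    | zero =>
      intro t' ht0' htc'
      simp only [zero_add, Function.iterate_one, Function.iterate_zero, id_eq, pow_zero, one_mul]
      exact hB t' ht0' htc'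
    | succ k ih =>
      intro t' ht0' htc'
      have e1 : T^[k+1+1] v₀ = Top J f (T^[k+1] v₀) :=
        (Function.iterate_succ_apply' T (k+1) v₀).trans (congrFun hTop _)
      have e2 : T^[k+1] v₀ = Top J f (T^[k] v₀) :=
        (Function.iterate_succ_apply' T k v₀).trans (congrFun hTop _)
      have hBk : ∀ s, 0 ≤ s → s ≤ α/2 →
          (∫ x : EuclideanSpace ℝ (Fin n),
            |(T^[k+1] v₀) (x, s) - (T^[k] v₀) (x, s)|)
            ≤ (∫ u in Set.Ioc 0 (α/2), mrg J u) ^ k * B := ih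
      have step := diff_step hJsupp hJnonneg hJmeas hJint hfmeas hfbdd
        (hnice k) (hnice (k+1))
        (mul_nonneg (pow_nonneg hτnn k) hB0) hBk ht0' htc'
      rw [e1, e2]
      rw [e2] at step
      refine le_trans step (le_of_eq (by ring))
  rw [hτ]
  exact key m t ht0 htc
end
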